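/- arXiv:1505.01336 — 10 statements merged into one kernel-verified Lean document; each statement's English description precedes it below -/
import Mathlib

section
/- Assume that for some μ ∈ ℂ the restriction of L to N_μ := ker(μ − A_m) is bijective onto ∂X with continuous inverse L_μ ∈ L(∂X, X) (so L_μ takes values in N_μ and L(L_μ x) = x for all x ∈ ∂X). Let λ ∈ ρ(A) with resolvent R ∈ L(X). Then the bounded linear operator L_λ := L_μ + (μ − λ)·(R ∘ L_μ) ∈ L(∂X, X) takes its values in N_λ := ker(λ − A_m), satisfies L(L_λ x) = x for every x ∈ ∂X, and the restriction of L to N_λ is bijective onto ∂X with inverse L_λ. Moreover L_λ x = μ·R(L_μ x) − A_m(R(L_μ x)) for every x ∈ ∂X. -/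
/-!
If `u ∈ ker (μ - A_m)` and `r = R u`, then `A_m r = λ r - u`, so `u + (μ - λ) r` lies in
`ker (λ - A_m)`, and it has the boundary value `L u` because `L r = 0`. Conversely, an element of
`ker (λ - A_m)` is recovered from its boundary value because `λ - A_m` is injective on `ker L`.
-/

section DirichletOperator

variable {𝕜 X dX : Type*} [CommRing 𝕜] [AddCommGroup X] [Module 𝕜 X] [AddCommGroup dX]
  [Module 𝕜 dX] {Dm : Submodule 𝕜 X} (Am : Dm →ₗ[𝕜] X) {μ lam : 𝕜}

theorem map_add_smul_eq_smul_of_resolvent {u r : Dm} (hu : Am u = μ • (u : X))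
    (hr : lam • (r : X) - Am r = u) :
    Am (u + (μ - lam) • r) = lam • ((u + (μ - lam) • r : Dm) : X) := by
  have hAr : Am r = lam • (r : X) - u := by rw [← hr]; abel
  rw [map_add, map_smul, hu, hAr, Submodule.coe_add, Submodule.coe_smul]
  module

theorem add_smul_eq_smul_sub_of_resolvent {u : X} {r : Dm} (hr : lam • (r : X) - Am r = u) :
    u + (μ - lam) • (r : X) = μ • (r : X) - Am r := by
  rw [← hr]
  module

-- `z - y ∈ ker L` and `(lam - Am) (z - y) = (lam - μ) z`, so `R` sends `(lam - μ) z` to `z - y`.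
theorem add_smul_resolvent_eq_of_map_eq (L : Dm →ₗ[𝕜] dX) {R : X →ₗ[𝕜] X}
    (hR : ∀ v : Dm, L v = 0 → R (lam • (v : X) - Am v) = v) {y z : Dm}
    (hy : Am y = lam • (y : X)) (hz : Am z = μ • (z : X)) (hLz : L z = L y) :
    (z : X) + (μ - lam) • R z = y := by
  have h := hR (z - y) (by rw [map_sub, hLz, sub_self])
  rw [map_sub Am, hy, hz, Submodule.coe_sub,
    show lam • ((z : X) - y) - (μ • (z : X) - lam • (y : X)) = (lam - μ) • (z : X) by module,
    map_smul] at h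
  rw [show μ - lam = -(lam - μ) by ring, neg_smul, h]
  abel

end DirichletOperator

theorem stmt_3_general {X dX : Type*} [NormedAddCommGroup X] [NormedSpace ℂ X]
    [NormedAddCommGroup dX] [NormedSpace ℂ dX]
    (Dm : Submodule ℂ X) (Am : Dm →ₗ[ℂ] X) (L : Dm →ₗ[ℂ] dX)
    (μ lam : ℂ) (Lμ : dX →L[ℂ] X) (R : X →L[ℂ] X)
    -- `L_μ` takes values in `N_μ = ker (μ - A_m)` :
    (hLμmem : ∀ x : dX, Lμ x ∈ Dm)
    (hLμker : ∀ x : dX, Am ⟨Lμ x, hLμmem x⟩ = μ • Lμ x)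
    -- `L_μ` is a right inverse of `L|_{N_μ}` :
    (hLLμ : ∀ x : dX, L ⟨Lμ x, hLμmem x⟩ = x)
    -- `R` is the resolvent of `A = A_m|_{ker L}` at `λ` :
    (hRmem : ∀ x : X, R x ∈ Dm)
    (hRdom : ∀ x : X, L ⟨R x, hRmem x⟩ = 0)
    (hRres : ∀ x : X, lam • R x - Am ⟨R x, hRmem x⟩ = x)
    (hRres' : ∀ y : Dm, L y = 0 → R (lam • (y : X) - Am y) = (y : X)) :
    -- `L_λ` takes values in `N_λ = ker (λ - A_m)` :
    (∀ x : dX, (Lμ + (μ - lam) • (R ∘L Lμ)) x ∈ Dm) ∧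
    (∀ x : dX, ∀ h : (Lμ + (μ - lam) • (R ∘L Lμ)) x ∈ Dm,
        Am ⟨(Lμ + (μ - lam) • (R ∘L Lμ)) x, h⟩ = lam • (Lμ + (μ - lam) • (R ∘L Lμ)) x) ∧
    -- `L_λ` is a right inverse of `L|_{N_λ}` (in particular `L|_{N_λ}` is surjective) :
    (∀ x : dX, ∀ h : (Lμ + (μ - lam) • (R ∘L Lμ)) x ∈ Dm,
        L ⟨(Lμ + (μ - lam) • (R ∘L Lμ)) x, h⟩ = x) ∧
    -- `L_λ` is a left inverse of `L|_{N_λ}` (in particular `L|_{N_λ}` is injective) :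
    (∀ y : Dm, Am y = lam • (y : X) → (Lμ + (μ - lam) • (R ∘L Lμ)) (L y) = (y : X)) ∧
    -- the alternative representation `L_λ = μ R L_μ - A_m R L_μ` :
    (∀ x : dX, (Lμ + (μ - lam) • (R ∘L Lμ)) x
        = μ • R (Lμ x) - Am ⟨R (Lμ x), hRmem (Lμ x)⟩) := by
  let u (x : dX) : Dm := ⟨Lμ x, hLμmem x⟩
  let r (x : dX) : Dm := ⟨R (Lμ x), hRmem (Lμ x)⟩
  have hLlam (x : dX) : (Lμ + (μ - lam) • (R ∘L Lμ)) x = ((u x + (μ - lam) • r x : Dm) : X) := by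
    simp [u, r]
  have hsplit (x : dX) (h : (Lμ + (μ - lam) • (R ∘L Lμ)) x ∈ Dm) :
      (⟨_, h⟩ : Dm) = u x + (μ - lam) • r x :=
    Subtype.ext (hLlam x)
  refine ⟨fun x => hLlam x ▸ (u x + (μ - lam) • r x).2, fun x h => ?_, fun x h => ?_,
    fun y hy => ?_, fun x => ?_⟩
  · rw [hsplit x h, hLlam x]
    exact map_add_smul_eq_smul_of_resolvent Am (hLμker x) (hRres (Lμ x))
  · rw [hsplit x h, map_add, map_smul, hLLμ, hRdom, smul_zero, add_zero]
  · simpa using add_smul_resolvent_eq_of_map_eq Am L (R := R.toLinearMap) hRres' hy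
      (hLμker (L y)) (hLLμ (L y))
  · rw [hLlam x]
    exact add_smul_eq_smul_sub_of_resolvent Am (hRres (Lμ x))

/-- **Dirichlet operators at arbitrary resolvent points.**
Let `X`, `∂X` be complex Banach spaces, `A_m : D_m → X` a linear (maximal) operator and
`L : D_m → ∂X` a linear boundary operator.  Assume that for some `μ ∈ ℂ` the restriction of
`L` to `N_μ = ker (μ - A_m)` is bijective onto `∂X` with continuous inverse `L_μ ∈ L(∂X, X)`,
and let `λ ∈ ρ(A)` (where `A = A_m|_{ker L}`) with resolvent `R ∈ L(X)`.
Then `L_λ := L_μ + (μ - λ) (R ∘ L_μ)` takes values in `N_λ = ker (λ - A_m)`, satisfies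
`L (L_λ x) = x`, the restriction of `L` to `N_λ` is bijective onto `∂X` with inverse `L_λ`,
and `L_λ x = μ • R (L_μ x) - A_m (R (L_μ x))`. -/
theorem stmt_3 {X dX : Type*} [NormedAddCommGroup X] [NormedSpace ℂ X] [CompleteSpace X]
    [NormedAddCommGroup dX] [NormedSpace ℂ dX] [CompleteSpace dX]
    (Dm : Submodule ℂ X) (Am : Dm →ₗ[ℂ] X) (L : Dm →ₗ[ℂ] dX)
    (μ lam : ℂ) (Lμ : dX →L[ℂ] X) (R : X →L[ℂ] X)
    -- `L_μ` takes values in `N_μ = ker (μ - A_m)` :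
    (hLμmem : ∀ x : dX, Lμ x ∈ Dm)
    (hLμker : ∀ x : dX, Am ⟨Lμ x, hLμmem x⟩ = μ • Lμ x)
    -- `L_μ` is a right inverse of `L|_{N_μ}` :
    (hLLμ : ∀ x : dX, L ⟨Lμ x, hLμmem x⟩ = x)
    -- `L_μ` is a left inverse of `L|_{N_μ}` :
    (hμinj : ∀ y : Dm, Am y = μ • (y : X) → Lμ (L y) = (y : X))
    -- `R` is the resolvent of `A = A_m|_{ker L}` at `λ` :
    (hRmem : ∀ x : X, R x ∈ Dm)
    (hRdom : ∀ x : X, L ⟨R x, hRmem x⟩ = 0)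
    (hRres : ∀ x : X, lam • R x - Am ⟨R x, hRmem x⟩ = x)
    (hRres' : ∀ y : Dm, L y = 0 → R (lam • (y : X) - Am y) = (y : X)) :
    -- `L_λ` takes values in `N_λ = ker (λ - A_m)` :
    (∀ x : dX, (Lμ + (μ - lam) • (R ∘L Lμ)) x ∈ Dm) ∧
    (∀ x : dX, ∀ h : (Lμ + (μ - lam) • (R ∘L Lμ)) x ∈ Dm,
        Am ⟨(Lμ + (μ - lam) • (R ∘L Lμ)) x, h⟩ = lam • (Lμ + (μ - lam) • (R ∘L Lμ)) x) ∧
    -- `L_λ` is a right inverse of `L|_{N_λ}` (in particular `L|_{N_λ}` is surjective) :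
    (∀ x : dX, ∀ h : (Lμ + (μ - lam) • (R ∘L Lμ)) x ∈ Dm,
        L ⟨(Lμ + (μ - lam) • (R ∘L Lμ)) x, h⟩ = x) ∧
    -- `L_λ` is a left inverse of `L|_{N_λ}` (in particular `L|_{N_λ}` is injective) :
    (∀ y : Dm, Am y = lam • (y : X) → (Lμ + (μ - lam) • (R ∘L Lμ)) (L y) = (y : X)) ∧
    -- the alternative representation `L_λ = μ R L_μ - A_m R L_μ` :
    (∀ x : dX, (Lμ + (μ - lam) • (R ∘L Lμ)) x
        = μ • R (Lμ x) - Am ⟨R (Lμ x), hRmem (Lμ x)⟩) :=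
  stmt_3_general Dm Am L μ lam Lμ R hLμmem hLμker hLLμ hRmem hRdom hRres hRres'
end

section
/- Let 0 < θ' < φ ≤ π/2 and for 0 < α ≤ π/2 set Σ_α := {z ∈ ℂ \ {0} : |arg z| < α}. Then Σ_φ = ⋃_{r>0} ((r·e^{iφ} + Σ_{θ'}) ∪ (r·e^{−iφ} + Σ_{θ'})), where r·e^{±iφ} + Σ_{θ'} := {r·e^{±iφ} + w : w ∈ Σ_{θ'}}. -/
/-!
For `0 ≤ α < π` the sector `Σ_α` is `{z | |Im z| cos α < Re z sin α}`, an intersection of two open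
half-planes; for `α ≤ π/2` it is a convex cone, so adding a point `r e^{±iφ}` of its boundary rays
keeps `Σ_θ' ⊆ Σ_φ` inside `Σ_φ`. Conversely, if `z ∈ Σ_φ` has `Im z > 0`, subtracting
`r e^{iφ}` with `r = Im z / sin φ` lands on the positive real axis, which lies in `Σ_θ'`; the case
`Im z < 0` follows by conjugation, and a positive real `z` lies in the open set `Σ_θ'`, so
`z - r e^{iφ} ∈ Σ_θ'` for small `r > 0`.
-/

open Real Filter Topology ComplexConjugate

theorem IsOpen.exists_pos_sub_smul_mem {E : Type*} [AddCommGroup E] [Module ℝ E]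
    [TopologicalSpace E] [IsTopologicalAddGroup E] [ContinuousSMul ℝ E] {s : Set E}
    (hs : IsOpen s) {x : E} (hx : x ∈ s) (v : E) : ∃ r : ℝ, 0 < r ∧ x - r • v ∈ s := by
  have hlim : Tendsto (fun r : ℝ => x - r • v) (𝓝[>] 0) (𝓝 x) := by
    have hcont : Continuous fun r : ℝ => x - r • v := by fun_prop
    simpa using (hcont.tendsto 0).mono_left nhdsWithin_le_nhds
  obtain ⟨r, hrs, hr⟩ := ((hlim.eventually_mem (hs.mem_nhds hx)).and self_mem_nhdsWithin).exists
  exact ⟨r, hr, hrs⟩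

def sector (α : ℝ) : Set ℂ := {z | z ≠ 0 ∧ |Complex.arg z| < α}

theorem sector_mono {α β : ℝ} (h : α ≤ β) : sector α ⊆ sector β :=
  fun _ ⟨hz, hlt⟩ => ⟨hz, hlt.trans_le h⟩

theorem ofReal_mem_sector {x α : ℝ} (hx : 0 < x) (hα : 0 < α) : (x : ℂ) ∈ sector α :=
  ⟨Complex.ofReal_ne_zero.mpr hx.ne', by rwa [Complex.arg_ofReal_of_nonneg hx.le, abs_zero]⟩

theorem re_mul_sin_sub_abs_im_mul_cos (z : ℂ) (α : ℝ) :
    z.re * sin α - |z.im| * cos α = ‖z‖ * sin (α - |Complex.arg z|) := by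
  rw [sin_sub, cos_abs, ← abs_sin_eq_sin_abs_of_abs_le_pi (Complex.abs_arg_le_pi z),
    ← Complex.norm_mul_cos_arg, ← Complex.norm_mul_sin_arg, abs_mul, abs_norm]
  ring

theorem mem_sector_iff {α : ℝ} (h0 : 0 ≤ α) (hπ : α < π) {z : ℂ} :
    z ∈ sector α ↔ |z.im| * cos α < z.re * sin α := by
  rw [← sub_pos, re_mul_sin_sub_abs_im_mul_cos]
  constructor
  · rintro ⟨hz, harg⟩
    exact mul_pos (norm_pos_iff.mpr hz)
      (sin_pos_of_pos_of_lt_pi (by linarith) (by linarith [abs_nonneg (Complex.arg z)]))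
  · intro h
    refine ⟨fun hz => by simp [hz] at h, ?_⟩
    by_contra! harg
    have hsin := sin_nonpos_of_nonpos_of_neg_pi_le (sub_nonpos.mpr harg)
      (by linarith [Complex.abs_arg_le_pi z])
    exact (mul_nonpos_of_nonneg_of_nonpos (norm_nonneg z) hsin).not_gt h

theorem isOpen_sector {α : ℝ} (h0 : 0 ≤ α) (hπ : α < π) : IsOpen (sector α) := by
  have hset : sector α = {z : ℂ | |z.im| * cos α < z.re * sin α} :=
    Set.ext fun _ => mem_sector_iff h0 hπ
  rw [hset]
  exact isOpen_lt (by fun_prop) (by fun_prop)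

theorem add_mem_sector {α : ℝ} (h0 : 0 ≤ α) (hα : α ≤ π / 2) {c w : ℂ}
    (hc : |c.im| * cos α ≤ c.re * sin α) (hw : w ∈ sector α) : c + w ∈ sector α := by
  have hπ : α < π := by linarith [pi_pos]
  have hcos : 0 ≤ cos α := cos_nonneg_of_mem_Icc ⟨by linarith, hα⟩
  rw [mem_sector_iff h0 hπ] at hw ⊢
  calc |(c + w).im| * cos α ≤ (|c.im| + |w.im|) * cos α := by
        gcongr; exact abs_add_le c.im w.im
    _ < (c + w).re * sin α := by rw [Complex.add_re]; linarith

theorem ofReal_mul_exp_add_mem_sector {α ψ r : ℝ} {w : ℂ} (h0 : 0 ≤ α) (hα : α ≤ π / 2)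
    (hψ : |ψ| = α) (hr : 0 ≤ r) (hw : w ∈ sector α) :
    r * Complex.exp (ψ * Complex.I) + w ∈ sector α := by
  refine add_mem_sector h0 hα (le_of_eq ?_) hw
  have hsin : |sin ψ| = sin α := by
    rw [abs_sin_eq_sin_abs_of_abs_le_pi (by linarith [pi_pos]), hψ]
  rw [Complex.re_ofReal_mul, Complex.im_ofReal_mul, Complex.exp_ofReal_mul_I_re,
    Complex.exp_ofReal_mul_I_im, abs_mul, abs_of_nonneg hr, hsin, ← cos_abs ψ, hψ]
  ring

theorem conj_mem_sector {α : ℝ} {z : ℂ} (hz : z ∈ sector α) : conj z ∈ sector α := by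
  refine ⟨(map_ne_zero _).mpr hz.1, ?_⟩
  rw [Complex.arg_conj]
  split_ifs with hπ
  · rw [← hπ]; exact hz.2
  · rw [abs_neg]; exact hz.2

namespace Complex

theorem conj_ofReal_mul_exp (r ψ : ℝ) :
    conj (r * exp (ψ * I)) = r * exp (-ψ * I) := by
  rw [map_mul, conj_ofReal, ← exp_conj, map_mul, conj_ofReal, conj_I, mul_neg, neg_mul]

theorem sub_ofReal_mul_exp_eq_ofReal (z : ℂ) {ψ : ℝ} (hψ : Real.sin ψ ≠ 0) :
    z - ((z.im / Real.sin ψ : ℝ) : ℂ) * exp (ψ * I) =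
      ((z.re - z.im / Real.sin ψ * Real.cos ψ : ℝ) : ℂ) := by
  apply Complex.ext
  · simp only [sub_re, re_ofReal_mul, exp_ofReal_mul_I_re, ofReal_re]
  · simp only [sub_im, im_ofReal_mul, exp_ofReal_mul_I_im, ofReal_im]
    field_simp
    ring

end Complex

theorem exists_pos_sub_mem_sector_of_im_pos {θ φ : ℝ} (hθ : 0 < θ) (hφ : 0 < φ) (hφπ : φ < π)
    {z : ℂ} (hz : z ∈ sector φ) (him : 0 < z.im) :
    ∃ r : ℝ, 0 < r ∧ z - r * Complex.exp (φ * Complex.I) ∈ sector θ := by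
  have hsin : 0 < sin φ := sin_pos_of_pos_of_lt_pi hφ hφπ
  rw [mem_sector_iff hφ.le hφπ, abs_of_pos him] at hz
  refine ⟨z.im / sin φ, div_pos him hsin, ?_⟩
  rw [Complex.sub_ofReal_mul_exp_eq_ofReal z hsin.ne']
  refine ofReal_mem_sector ?_ hθ
  rw [div_mul_eq_mul_div, sub_pos, div_lt_iff₀ hsin]
  exact hz

theorem exists_pos_sub_mem_sector {θ φ : ℝ} (hθ : 0 < θ) (hθφ : θ < φ) (hφ : φ ≤ π / 2)
    {z : ℂ} (hz : z ∈ sector φ) :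
    ∃ r : ℝ, 0 < r ∧ (z - r * Complex.exp (φ * Complex.I) ∈ sector θ ∨
      z - r * Complex.exp (-φ * Complex.I) ∈ sector θ) := by
  have hφ0 : 0 < φ := hθ.trans hθφ
  have hφπ : φ < π := by linarith [pi_pos]
  rcases lt_trichotomy z.im 0 with him | him | him
  · obtain ⟨r, hr, hmem⟩ := exists_pos_sub_mem_sector_of_im_pos hθ hφ0 hφπ (conj_mem_sector hz)
      (by simpa using him)
    refine ⟨r, hr, Or.inr ?_⟩
    simpa only [map_sub, Complex.conj_conj, Complex.conj_ofReal_mul_exp] using conj_mem_sector hmem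
  · have hzθ : z ∈ sector θ := by
      rw [mem_sector_iff hφ0.le hφπ, him, abs_zero, zero_mul] at hz
      rw [mem_sector_iff hθ.le (by linarith), him, abs_zero, zero_mul]
      exact mul_pos (pos_of_mul_pos_left hz (sin_pos_of_pos_of_lt_pi hφ0 hφπ).le)
        (sin_pos_of_pos_of_lt_pi hθ (by linarith))
    obtain ⟨r, hr, hmem⟩ := (isOpen_sector hθ.le (by linarith)).exists_pos_sub_smul_mem hzθ
      (Complex.exp (φ * Complex.I))
    exact ⟨r, hr, Or.inl (by simpa [Complex.real_smul] using hmem)⟩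
  · obtain ⟨r, hr, hmem⟩ := exists_pos_sub_mem_sector_of_im_pos hθ hφ0 hφπ hz him
    exact ⟨r, hr, Or.inl hmem⟩

/-- **Covering the sector `Σ_φ` by translated subsectors.**
Let `0 < θ' < φ ≤ π/2` and `Σ_α = {z ∈ ℂ \ {0} : |arg z| < α}`.  Then
`Σ_φ = ⋃_{r>0} ((r e^{iφ} + Σ_{θ'}) ∪ (r e^{-iφ} + Σ_{θ'}))`. -/
theorem stmt_7 (θ' φ : ℝ) (h1 : 0 < θ') (h2 : θ' < φ) (h3 : φ ≤ Real.pi / 2) :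
    {z : ℂ | z ≠ 0 ∧ |Complex.arg z| < φ} =
      ⋃ r ∈ Set.Ioi (0 : ℝ),
        ((fun w => (r : ℂ) * Complex.exp ((φ : ℂ) * Complex.I) + w) ''
            {z : ℂ | z ≠ 0 ∧ |Complex.arg z| < θ'} ∪
          (fun w => (r : ℂ) * Complex.exp (-(φ : ℂ) * Complex.I) + w) ''
            {z : ℂ | z ≠ 0 ∧ |Complex.arg z| < θ'}) := by
  have hφ : 0 ≤ φ := (h1.trans h2).le
  ext z
  simp only [Set.mem_iUnion, Set.mem_union, Set.mem_image, Set.mem_Ioi, exists_prop]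
  constructor
  · intro hz
    obtain ⟨r, hr, hmem | hmem⟩ := exists_pos_sub_mem_sector h1 h2 h3 hz
    · exact ⟨r, hr, Or.inl ⟨_, hmem, add_sub_cancel _ _⟩⟩
    · exact ⟨r, hr, Or.inr ⟨_, hmem, add_sub_cancel _ _⟩⟩
  · rintro ⟨r, hr, ⟨w, hw, rfl⟩ | ⟨w, hw, rfl⟩⟩
    · exact ofReal_mul_exp_add_mem_sector hφ h3 (abs_of_nonneg hφ) hr.le (sector_mono h2.le hw)
    · rw [← Complex.ofReal_neg]
      exact ofReal_mul_exp_add_mem_sector hφ h3 (by rw [abs_neg, abs_of_nonneg hφ]) hr.le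
        (sector_mono h2.le hw)
end

section
/- Let X be a complex Banach space, 0 < θ' < φ ≤ π/2, and set S̄_φ := {0} ∪ {z ∈ ℂ \ {0} : |arg z| ≤ φ} and Σ_α := {z ∈ ℂ \ {0} : |arg z| < α}. Let F : S̄_φ → L(X) satisfy F(z + w) = F(z) ∘ F(w) for all z, w ∈ S̄_φ. If the restriction of F to Σ_{θ'} is holomorphic (differentiable in operator norm at every point of Σ_{θ'}), then F is holomorphic on all of Σ_φ. -/
/-- The open sector `Σ_α = {z ∈ ℂ \ {0} : |arg z| < α}`. -/
def Sector (α : ℝ) : Set ℂ := {z : ℂ | z ≠ 0 ∧ |Complex.arg z| < α}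

/-- The closed sector `S̄_φ = {0} ∪ {z ∈ ℂ \ {0} : |arg z| ≤ φ}`. -/
def ClosedSector (φ : ℝ) : Set ℂ := {z : ℂ | z = 0 ∨ |Complex.arg z| ≤ φ}

/-!
Given `z ∈ Σ_φ`, choose a small `ε > 0` with `z - ε ∈ Σ_φ`. Near `z` the semigroup law gives
`F ζ = F (ζ - (z - ε)) ∘ F (z - ε)`, and `ζ - (z - ε)` ranges over a neighbourhood of the
positive real `ε`, which lies in `Σ_θ'` where `F` is holomorphic. So `F` is, near `z`, a
translate of a holomorphic function composed with a fixed operator.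
-/

open Filter Topology

theorem DifferentiableAt.add_of_map_add_eq_comp {𝕜 E : Type*} [NontriviallyNormedField 𝕜]
    [NormedAddCommGroup E] [NormedSpace 𝕜 E] {F : 𝕜 → E →L[𝕜] E} {S : Set 𝕜}
    (hS : ∀ z ∈ S, ∀ w ∈ S, F (z + w) = F z ∘L F w) {u v : 𝕜} (hu : S ∈ 𝓝 u) (hv : v ∈ S)
    (hF : DifferentiableAt 𝕜 F u) : DifferentiableAt 𝕜 F (u + v) := by
  have htrans : DifferentiableAt 𝕜 (fun ζ ↦ F (ζ - v)) (u + v) :=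
    differentiableAt_comp_sub_const.mpr (by simpa using hF)
  have hnear : ∀ᶠ ζ in 𝓝 (u + v), ζ - v ∈ S := by
    have hcont : ContinuousAt (fun ζ : 𝕜 ↦ ζ - v) (u + v) := by fun_prop
    exact hcont.preimage_mem_nhds (by simpa using hu)
  refine (htrans.clm_comp (differentiableAt_const (F v))).congr_of_eventuallyEq ?_
  filter_upwards [hnear] with ζ hζ
  simpa using hS (ζ - v) hζ v hv

theorem isOpen_sector_s9 (α : ℝ) : IsOpen (Sector α) := by
  refine isOpen_iff_mem_nhds.mpr fun z ⟨hz0, hz⟩ ↦ ?_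
  by_cases hslit : z ∈ Complex.slitPlane
  · filter_upwards [isOpen_ne.mem_nhds hz0,
      ((Complex.continuousAt_arg hslit).abs).eventually_lt continuousAt_const hz]
      with ζ hζ0 hζ using ⟨hζ0, hζ⟩
  · have hπ : Real.pi < α := by
      have : z.arg = Real.pi := by simpa [Complex.mem_slitPlane_iff_arg, hz0] using hslit
      simpa [this, abs_of_pos Real.pi_pos] using hz
    filter_upwards [isOpen_ne.mem_nhds hz0] with ζ hζ0
      using ⟨hζ0, (Complex.abs_arg_le_pi ζ).trans_lt hπ⟩

theorem ofReal_mem_sector_s9 {α ε : ℝ} (hα : 0 < α) (hε : 0 < ε) : (ε : ℂ) ∈ Sector α :=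
  ⟨Complex.ofReal_ne_zero.mpr hε.ne', by simpa [Complex.arg_ofReal_of_nonneg hε.le] using hα⟩

theorem sector_subset_closedSector (α : ℝ) : Sector α ⊆ ClosedSector α :=
  fun _ hz ↦ Or.inr hz.2.le

theorem exists_pos_sub_ofReal_mem {s : Set ℂ} (hs : IsOpen s) {z : ℂ} (hz : z ∈ s) :
    ∃ ε : ℝ, 0 < ε ∧ z - ε ∈ s := by
  obtain ⟨r, hr, hball⟩ := Metric.isOpen_iff.mp hs z hz
  refine ⟨r / 2, half_pos hr, hball ?_⟩
  simp [abs_of_pos hr, hr]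

theorem stmt_9_general {X : Type*} [NormedAddCommGroup X] [NormedSpace ℂ X]
    (θ' φ : ℝ) (h1 : 0 < θ')
    (F : ℂ → X →L[ℂ] X)
    (hsg : ∀ z ∈ ClosedSector φ, ∀ w ∈ ClosedSector φ, F (z + w) = F z ∘L F w)
    (hol : DifferentiableOn ℂ F (Sector θ')) :
    DifferentiableOn ℂ F (Sector φ) := by
  intro z hz
  have hφ : 0 < φ := (abs_nonneg _).trans_lt hz.2
  obtain ⟨ε, hε, hzε⟩ := exists_pos_sub_ofReal_mem (isOpen_sector_s9 φ) hz
  have hεφ : ClosedSector φ ∈ 𝓝 (ε : ℂ) :=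
    mem_of_superset ((isOpen_sector_s9 φ).mem_nhds (ofReal_mem_sector_s9 hφ hε))
      (sector_subset_closedSector φ)
  have hFε : DifferentiableAt ℂ F ε :=
    hol.differentiableAt ((isOpen_sector_s9 θ').mem_nhds (ofReal_mem_sector_s9 h1 hε))
  have hFz := hFε.add_of_map_add_eq_comp hsg hεφ (sector_subset_closedSector φ hzε)
  rw [add_sub_cancel] at hFz
  exact hFz.differentiableWithinAt

/-- **Extension of holomorphy via the semigroup law.**
Let `X` be a complex Banach space, `0 < θ' < φ ≤ π/2`, and let `F : S̄_φ → L(X)` satisfy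
`F(z+w) = F(z) ∘ F(w)` for all `z, w ∈ S̄_φ`.  If `F` is holomorphic (in operator norm)
on `Σ_{θ'}`, then `F` is holomorphic on all of `Σ_φ`. -/
theorem stmt_9 {X : Type*} [NormedAddCommGroup X] [NormedSpace ℂ X] [CompleteSpace X]
    (θ' φ : ℝ) (h1 : 0 < θ') (h2 : θ' < φ) (h3 : φ ≤ Real.pi / 2)
    (F : ℂ → X →L[ℂ] X)
    (hsg : ∀ z ∈ ClosedSector φ, ∀ w ∈ ClosedSector φ, F (z + w) = F z ∘L F w)
    (hol : DifferentiableOn ℂ F (Sector θ')) :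
    DifferentiableOn ℂ F (Sector φ) :=
  stmt_9_general θ' φ h1 F hsg hol
end

section
/- Let X be a complex Banach space, D(A) ⊆ X a linear subspace, A : D(A) → X linear, and φ ∈ ℝ. Suppose that for every λ > 0 there exist bounded operators R(λ), R_φ(λ) ∈ L(X) with range contained in D(A) such that λ·R(λ)x − A(R(λ)x) = x and λ·R_φ(λ)x − e^{iφ}A(R_φ(λ)x) = x for all x ∈ X, R(λ)(λy − Ay) = y and R_φ(λ)(λy − e^{iφ}Ay) = y for all y ∈ D(A), and that sup_{λ>0} ‖λR(λ)‖ < ∞ and sup_{λ>0} ‖λR_φ(λ)‖ < ∞. Then for every α ∈ (0,1] and every x ∈ X: sup_{λ>0} ‖λ^α(λR(λ)x − x)‖ < ∞ if and only if sup_{λ>0} ‖λ^α(λR_φ(λ)x − x)‖ < ∞. (Equivalently, the Favard space of order α of A coincides with that of A_φ = e^{iφ}A, since A(R(λ)x) = λR(λ)x − x and e^{iφ}A(R_φ(λ)x) = λR_φ(λ)x − x.) -/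
/-!
If `B = c • A` on a common domain `D`, `y ∈ D` solves `λ y - A y = x` and `T` is a left
inverse of `λ - B`, then `λ y - B y = x + (1 - c) A y` with `A y = λ y - x`, so
`λ T x - x = (λ y - x) + (c - 1) λ T (λ y - x)`. A uniform bound on `‖λ T‖` therefore controls
`‖λ T x - x‖` by a constant multiple of `‖λ y - x‖ = ‖A y‖`. Applied with `(A, e^{iφ} A)` and with
`(e^{iφ} A, A)`, this transfers the Favard bounds in both directions.
-/

section FavardComparison

variable {X : Type*} [NormedAddCommGroup X] [NormedSpace ℂ X] {D : Submodule ℂ X}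
  {A B : D →ₗ[ℂ] X} {c : ℂ}

theorem smul_apply_sub_eq_of_left_inverse (hB : ∀ y, B y = c • A y) {T : X →L[ℂ] X} {l : ℂ}
    (hT : ∀ y : D, T (l • (y : X) - B y) = y) {x : X} {y : D} (hy : l • (y : X) - A y = x) :
    l • T x - x = (l • (y : X) - x) + (c - 1) • l • T (l • (y : X) - x) := by
  have hAy : A y = l • (y : X) - x := by rw [← hy]; abel
  have hTx : T x = y + (c - 1) • T (l • (y : X) - x) := by
    have hsplit : l • (y : X) - B y = x + (1 - c) • A y := by rw [hB, ← hy]; module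
    rw [← hAy, ← hT y, hsplit, map_add, map_smul]
    module
  rw [hTx]
  module

theorem norm_smul_apply_sub_le_of_left_inverse (hB : ∀ y, B y = c • A y) {T : X →L[ℂ] X}
    {l : ℂ} (hT : ∀ y : D, T (l • (y : X) - B y) = y) {M : ℝ} (hM : ‖l‖ * ‖T‖ ≤ M) {x : X}
    {y : D} (hy : l • (y : X) - A y = x) :
    ‖l • T x - x‖ ≤ (1 + ‖c - 1‖ * M) * ‖l • (y : X) - x‖ := by
  set z := l • (y : X) - x
  have hTz : ‖l • T z‖ ≤ M * ‖z‖ :=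
    calc ‖l • T z‖ ≤ ‖l‖ * (‖T‖ * ‖z‖) := by
          rw [norm_smul]; gcongr; exact T.le_opNorm z
      _ ≤ M * ‖z‖ := by rw [← mul_assoc]; gcongr
  calc ‖l • T x - x‖ = ‖z + (c - 1) • l • T z‖ := by
        rw [smul_apply_sub_eq_of_left_inverse hB hT hy]
    _ ≤ ‖z‖ + ‖c - 1‖ * (M * ‖z‖) := by
        grw [norm_add_le, norm_smul, hTz]
    _ = (1 + ‖c - 1‖ * M) * ‖z‖ := by ring

theorem favard_bound_of_left_inverse (hB : ∀ y, B y = c • A y) (S T : ℝ → X →L[ℂ] X)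
    (hSmem : ∀ l : ℝ, 0 < l → ∀ x : X, S l x ∈ D)
    (hS : ∀ l : ℝ, ∀ hl : 0 < l, ∀ x : X, (l : ℂ) • S l x - A ⟨S l x, hSmem l hl x⟩ = x)
    (hT : ∀ l : ℝ, 0 < l → ∀ y : D, T l ((l : ℂ) • (y : X) - B y) = (y : X))
    (hTbdd : ∃ M : ℝ, ∀ l : ℝ, 0 < l → l * ‖T l‖ ≤ M) (α : ℝ) (x : X)
    (hSx : ∃ C : ℝ, ∀ l : ℝ, 0 < l → l ^ α * ‖(l : ℂ) • S l x - x‖ ≤ C) :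
    ∃ C : ℝ, ∀ l : ℝ, 0 < l → l ^ α * ‖(l : ℂ) • T l x - x‖ ≤ C := by
  obtain ⟨M, hM⟩ := hTbdd
  obtain ⟨C, hC⟩ := hSx
  have hM0 : 0 ≤ M := (by positivity : (0 : ℝ) ≤ 1 * ‖T 1‖).trans (hM 1 one_pos)
  refine ⟨(1 + ‖c - 1‖ * M) * C, fun l hl => ?_⟩
  have hl' : ‖(l : ℂ)‖ * ‖T l‖ ≤ M := by
    rw [Complex.norm_real, Real.norm_of_nonneg hl.le]; exact hM l hl
  calc l ^ α * ‖(l : ℂ) • T l x - x‖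
      ≤ l ^ α * ((1 + ‖c - 1‖ * M) * ‖(l : ℂ) • S l x - x‖) := by
        gcongr
        exact norm_smul_apply_sub_le_of_left_inverse (y := ⟨S l x, hSmem l hl x⟩) hB (hT l hl) hl'
          (hS l hl x)
    _ = (1 + ‖c - 1‖ * M) * (l ^ α * ‖(l : ℂ) • S l x - x‖) := by ring
    _ ≤ (1 + ‖c - 1‖ * M) * C := by gcongr; exact hC l hl

end FavardComparison

theorem stmt_10_general {X : Type*} [NormedAddCommGroup X] [NormedSpace ℂ X]
    (DA : Submodule ℂ X) (A : DA →ₗ[ℂ] X) (φ : ℝ)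
    (R Rφ : ℝ → X →L[ℂ] X)
    (hRmem : ∀ l : ℝ, 0 < l → ∀ x : X, R l x ∈ DA)
    (hRφmem : ∀ l : ℝ, 0 < l → ∀ x : X, Rφ l x ∈ DA)
    (hRres : ∀ l : ℝ, ∀ hl : 0 < l, ∀ x : X,
      (l : ℂ) • R l x - A ⟨R l x, hRmem l hl x⟩ = x)
    (hRφres : ∀ l : ℝ, ∀ hl : 0 < l, ∀ x : X,
      (l : ℂ) • Rφ l x - Complex.exp ((φ : ℂ) * Complex.I) • A ⟨Rφ l x, hRφmem l hl x⟩ = x)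
    (hRres' : ∀ l : ℝ, 0 < l → ∀ y : DA, R l ((l : ℂ) • (y : X) - A y) = (y : X))
    (hRφres' : ∀ l : ℝ, 0 < l → ∀ y : DA,
      Rφ l ((l : ℂ) • (y : X) - Complex.exp ((φ : ℂ) * Complex.I) • A y) = (y : X))
    (hRbdd : ∃ C : ℝ, ∀ l : ℝ, 0 < l → l * ‖R l‖ ≤ C)
    (hRφbdd : ∃ C : ℝ, ∀ l : ℝ, 0 < l → l * ‖Rφ l‖ ≤ C) :
    ∀ α : ℝ, 0 < α → α ≤ 1 → ∀ x : X,
      ((∃ C : ℝ, ∀ l : ℝ, 0 < l → l ^ α * ‖(l : ℂ) • R l x - x‖ ≤ C) ↔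
        (∃ C : ℝ, ∀ l : ℝ, 0 < l → l ^ α * ‖(l : ℂ) • Rφ l x - x‖ ≤ C)) := by
  intro α _ _ x
  set e := Complex.exp ((φ : ℂ) * Complex.I)
  have he : e ≠ 0 := Complex.exp_ne_zero _
  constructor
  · exact favard_bound_of_left_inverse (B := e • A) (c := e) (fun _ => rfl)
      R Rφ hRmem hRres hRφres' hRφbdd α x
  · exact favard_bound_of_left_inverse (A := e • A) (B := A) (c := e⁻¹)
      (fun y => by rw [LinearMap.smul_apply, inv_smul_smul₀ he])
      Rφ R hRφmem hRφres hRres' hRbdd α x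

/-- **Equality of Favard spaces of `A` and of `A_φ = e^{iφ} A`.**
Let `A : D(A) → X` be linear on a subspace of a complex Banach space `X` and `φ ∈ ℝ`.
Suppose that for every `λ > 0` both `A` and `e^{iφ}A` have a resolvent at `λ`
(operators `R(λ)`, `R_φ(λ)` with the usual left/right inverse identities), satisfying the
Hille--Yosida-type bounds `sup_{λ>0} ‖λ R(λ)‖ < ∞` and `sup_{λ>0} ‖λ R_φ(λ)‖ < ∞`.
Then for every `α ∈ (0,1]` and `x ∈ X`:
`sup_{λ>0} ‖λ^α (λ R(λ) x - x)‖ < ∞  ↔  sup_{λ>0} ‖λ^α (λ R_φ(λ) x - x)‖ < ∞`,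
i.e. `Fav_α^A = Fav_α^{A_φ}` (note `A R(λ) x = λ R(λ) x - x` and
`e^{iφ} A R_φ(λ) x = λ R_φ(λ) x - x`). -/
theorem stmt_10 {X : Type*} [NormedAddCommGroup X] [NormedSpace ℂ X] [CompleteSpace X]
    (DA : Submodule ℂ X) (A : DA →ₗ[ℂ] X) (φ : ℝ)
    (R Rφ : ℝ → X →L[ℂ] X)
    (hRmem : ∀ l : ℝ, 0 < l → ∀ x : X, R l x ∈ DA)
    (hRφmem : ∀ l : ℝ, 0 < l → ∀ x : X, Rφ l x ∈ DA)
    (hRres : ∀ l : ℝ, ∀ hl : 0 < l, ∀ x : X,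
      (l : ℂ) • R l x - A ⟨R l x, hRmem l hl x⟩ = x)
    (hRφres : ∀ l : ℝ, ∀ hl : 0 < l, ∀ x : X,
      (l : ℂ) • Rφ l x - Complex.exp ((φ : ℂ) * Complex.I) • A ⟨Rφ l x, hRφmem l hl x⟩ = x)
    (hRres' : ∀ l : ℝ, 0 < l → ∀ y : DA, R l ((l : ℂ) • (y : X) - A y) = (y : X))
    (hRφres' : ∀ l : ℝ, 0 < l → ∀ y : DA,
      Rφ l ((l : ℂ) • (y : X) - Complex.exp ((φ : ℂ) * Complex.I) • A y) = (y : X))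
    (hRbdd : ∃ C : ℝ, ∀ l : ℝ, 0 < l → l * ‖R l‖ ≤ C)
    (hRφbdd : ∃ C : ℝ, ∀ l : ℝ, 0 < l → l * ‖Rφ l‖ ≤ C) :
    ∀ α : ℝ, 0 < α → α ≤ 1 → ∀ x : X,
      ((∃ C : ℝ, ∀ l : ℝ, 0 < l → l ^ α * ‖(l : ℂ) • R l x - x‖ ≤ C) ↔
        (∃ C : ℝ, ∀ l : ℝ, 0 < l → l ^ α * ‖(l : ℂ) • Rφ l x - x‖ ≤ C)) :=
  stmt_10_general DA A φ R Rφ hRmem hRφmem hRres hRφres hRres' hRφres' hRbdd hRφbdd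
end

section
/- Let f : [0,1] → ℝ be continuous and twice differentiable on (0,1), and let a : (0,1) → (0,∞) be continuous. Suppose N := sup_{r∈(0,1)} |a(r)·f''(r)| < ∞. Then for every s ∈ (0,1) and every ε ≠ 0 with s + ε ∈ (0,1): |f'(s)| ≤ (2/|ε|)·sup_{t∈[0,1]} |f(t)| + N·|∫_s^{s+ε} dr/a(r)|. -/
/-!
Taylor's formula with integral remainder, expanded at `s` and evaluated at `s + ε`, gives
`ε f'(s) = f(s + ε) - f(s) - ∫_s^{s+ε} (s + ε - r) f''(r) dr`. On the segment
`|s + ε - r| ≤ |ε|` and `|f''(r)| ≤ N / a(r)`, so the remainder is at most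
`|ε| N |∫_s^{s+ε} dr / a(r)|`. The domination by the continuous function `|ε| N / a` is also what
makes `f''`, which need not be continuous, integrable on the segment.
-/

open Set intervalIntegral MeasureTheory

theorem abs_sub_le_abs_integral_of_abs_deriv_le {g g' h : ℝ → ℝ} {x y : ℝ}
    (hg : ∀ r ∈ uIcc x y, HasDerivAt g (g' r) r) (hh : IntervalIntegrable h volume x y)
    (hle : ∀ r ∈ uIcc x y, |g' r| ≤ h r) :
    |g y - g x| ≤ |∫ r in x..y, h r| := by
  have hle_ae : ∀ᵐ r ∂volume.restrict (uIoc x y), ‖g' r‖ ≤ h r :=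
    (ae_restrict_mem measurableSet_uIoc).mono fun r hr => hle r (uIoc_subset_uIcc hr)
  have hmeas : AEStronglyMeasurable g' (volume.restrict (uIoc x y)) := by
    refine (measurable_deriv g).aestronglyMeasurable.congr ?_
    filter_upwards [ae_restrict_mem measurableSet_uIoc] with r hr
    exact (hg r (uIoc_subset_uIcc hr)).deriv
  rw [← integral_eq_sub_of_hasDerivAt hg (hh.mono_fun' hmeas hle_ae)]
  exact norm_integral_le_abs_of_norm_le hle_ae hh

theorem abs_taylor_remainder_le {f f' f'' h : ℝ → ℝ} {s t : ℝ}
    (hf' : ∀ r ∈ uIcc s t, HasDerivAt f (f' r) r)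
    (hf'' : ∀ r ∈ uIcc s t, HasDerivAt f' (f'' r) r)
    (hh : IntervalIntegrable h volume s t)
    (hle : ∀ r ∈ uIcc s t, |t - s| * |f'' r| ≤ h r) :
    |f t - f s - (t - s) * f' s| ≤ |∫ r in s..t, h r| := by
  have hg : ∀ r ∈ uIcc s t,
      HasDerivAt (fun r => f r + (t - r) * f' r) ((t - r) * f'' r) r := fun r hr =>
    ((hf' r hr).fun_add (((hasDerivAt_id' r).const_sub t).fun_mul (hf'' r hr))).congr_deriv
      (by ring)
  convert abs_sub_le_abs_integral_of_abs_deriv_le hg hh fun r hr => ?_ using 2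
  · rw [sub_self, zero_mul, add_zero, sub_sub]
  · rw [abs_mul]
    exact (mul_le_mul_of_nonneg_right (abs_sub_right_of_mem_uIcc hr) (abs_nonneg _)).trans
      (hle r hr)

theorem abs_deriv_le_of_abs_taylor_remainder_le {f f' : ℝ → ℝ} {s ε M R : ℝ} (hε : ε ≠ 0)
    (hs : |f s| ≤ M) (hsε : |f (s + ε)| ≤ M) (hR : |f (s + ε) - f s - ε * f' s| ≤ |ε| * R) :
    |f' s| ≤ 2 / |ε| * M + R := by
  have hε' : 0 < |ε| := abs_pos.2 hε
  have hmul : |ε| * |f' s| ≤ 2 * M + |ε| * R := by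
    rw [← abs_mul]
    calc |ε * f' s| = |f (s + ε) - f s - (f (s + ε) - f s - ε * f' s)| := by rw [sub_sub_cancel]
      _ ≤ |f (s + ε)| + |f s| + |f (s + ε) - f s - ε * f' s| :=
        (abs_sub _ _).trans (add_le_add_left (abs_sub _ _) _)
      _ ≤ 2 * M + |ε| * R := by linarith
  rw [← mul_le_mul_iff_right₀ hε', mul_add, ← mul_assoc, mul_div_cancel₀ _ hε'.ne']
  exact hmul

/-- **Taylor estimate for the first derivative.**
Let `f : [0,1] → ℝ` be continuous and twice differentiable on `(0,1)`, let
`a : (0,1) → (0,∞)` be continuous, and let `N = sup_{r ∈ (0,1)} |a(r) f''(r)| < ∞`.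
Then for every `s ∈ (0,1)` and every `ε ≠ 0` with `s + ε ∈ (0,1)`:
`|f'(s)| ≤ (2/|ε|) sup_{t ∈ [0,1]} |f(t)| + N |∫_s^{s+ε} dr / a(r)|`. -/
theorem stmt_11 (f f' f'' a : ℝ → ℝ)
    (hf : ContinuousOn f (Set.Icc 0 1))
    (hf' : ∀ x ∈ Set.Ioo (0 : ℝ) 1, HasDerivAt f (f' x) x)
    (hf'' : ∀ x ∈ Set.Ioo (0 : ℝ) 1, HasDerivAt f' (f'' x) x)
    (ha : ContinuousOn a (Set.Ioo 0 1))
    (hapos : ∀ r ∈ Set.Ioo (0 : ℝ) 1, 0 < a r)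
    (hbdd : BddAbove ((fun r => |a r * f'' r|) '' Set.Ioo (0 : ℝ) 1)) :
    ∀ s ∈ Set.Ioo (0 : ℝ) 1, ∀ ε : ℝ, ε ≠ 0 → s + ε ∈ Set.Ioo (0 : ℝ) 1 →
      |f' s| ≤ 2 / |ε| * sSup ((fun t => |f t|) '' Set.Icc (0 : ℝ) 1) +
        sSup ((fun r => |a r * f'' r|) '' Set.Ioo (0 : ℝ) 1) *
          |∫ r in s..(s + ε), (a r)⁻¹| := by
  intro s hs ε hε hsε
  set N := sSup ((fun r => |a r * f'' r|) '' Ioo (0 : ℝ) 1)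
  have hsub : uIcc s (s + ε) ⊆ Ioo 0 1 := ordConnected_Ioo.uIcc_subset hs hsε
  have hfM : ∀ t ∈ Ioo (0 : ℝ) 1, |f t| ≤ sSup ((fun t => |f t|) '' Icc (0 : ℝ) 1) :=
    fun t ht => le_csSup (isCompact_Icc.bddAbove_image hf.abs) ⟨t, Ioo_subset_Icc_self ht, rfl⟩
  have hf''N : ∀ r ∈ Ioo (0 : ℝ) 1, |f'' r| ≤ N * (a r)⁻¹ := fun r hr => by
    rw [le_mul_inv_iff₀ (hapos r hr), mul_comm, ← abs_of_pos (hapos r hr), ← abs_mul]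
    exact le_csSup hbdd ⟨r, hr, rfl⟩
  have hainv : IntervalIntegrable (fun r => (a r)⁻¹) volume s (s + ε) :=
    ((ha.mono hsub).inv₀ fun r hr => (hapos r (hsub hr)).ne').intervalIntegrable
  have hR := abs_taylor_remainder_le (h := fun r => |ε| * (N * (a r)⁻¹))
    (fun r hr => hf' r (hsub hr)) (fun r hr => hf'' r (hsub hr))
    ((hainv.const_mul N).const_mul |ε|) fun r hr => by
      rw [add_sub_cancel_left]
      exact mul_le_mul_of_nonneg_left (hf''N r (hsub hr)) (abs_nonneg ε)
  have hN0 : 0 ≤ N := (abs_nonneg _).trans (le_csSup hbdd ⟨1 / 2, by norm_num, rfl⟩)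
  rw [add_sub_cancel_left, intervalIntegral.integral_const_mul,
    intervalIntegral.integral_const_mul, abs_mul, abs_abs, abs_mul, abs_of_nonneg hN0] at hR
  exact abs_deriv_le_of_abs_taylor_remainder_le hε (hfM s hs) (hfM _ hsε) hR
end

section
/- Let f : [0,1] → ℝ be continuous and twice differentiable on (0,1), let a : (0,1) → (0,∞) be continuous with N := sup_{r∈(0,1)} |a(r)·f''(r)| < ∞, and suppose there are δ ∈ (0,1] and M ≥ 0 such that |∫_s^t dr/a(r)| ≤ M·|t − s|^δ for all s, t ∈ (0,1). Set α := 1/(1+δ). Then for every ρ > 2^{1+δ} and every s ∈ (0,1): |f'(s)| ≤ (M + 2)·(ρ^α · sup_{t∈[0,1]} |f(t)| + ρ^{α−1} · N). -/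
/-!
Fix a step `h = ρ^{-α} ≤ 1/2`. By the mean value theorem on an interval of length `h` with
endpoint `s` inside `[0,1]`, some point `c` with `|c - s| ≤ h` has `|f'(c)| ≤ 2 sup|f| / h`.
On the other hand `|f''| ≤ N / a`, so integrating and using the Hölder bound on `∫ 1/a` gives
`|f'(s) - f'(c)| ≤ N M h^δ`. The choice `α = 1/(1+δ)` makes `h^δ = ρ^{α-1}`, which balances
the two terms.
-/

open Set MeasureTheory intervalIntegral

theorem abs_sub_le_integral_of_abs_deriv_le {g g' φ : ℝ → ℝ} {a b : ℝ} (hab : a ≤ b)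
    (hcont : ContinuousOn g (Icc a b)) (hderiv : ∀ x ∈ Ioo a b, HasDerivAt g (g' x) x)
    (φint : IntegrableOn φ (Icc a b)) (hφg : ∀ x ∈ Ioo a b, |g' x| ≤ φ x) :
    |g b - g a| ≤ ∫ y in a..b, φ y := by
  rw [abs_sub_le_iff]
  constructor
  · exact sub_le_integral_of_hasDeriv_right_of_le hab hcont
      (fun x hx => (hderiv x hx).hasDerivWithinAt) φint
      fun x hx => (le_abs_self _).trans (hφg x hx)
  · have := sub_le_integral_of_hasDeriv_right_of_le hab hcont.neg
      (fun x hx => (hderiv x hx).neg.hasDerivWithinAt) φint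
      fun x hx => (neg_le_abs _).trans (hφg x hx)
    simp only [Pi.neg_apply] at this
    linarith

theorem abs_sub_le_of_abs_mul_deriv_le_of_integral_inv_le {g g' a : ℝ → ℝ} {I : Set ℝ}
    {N M δ : ℝ} (hI : I.OrdConnected) (hg : ∀ x ∈ I, HasDerivAt g (g' x) x)
    (ha : ContinuousOn a I) (hapos : ∀ x ∈ I, 0 < a x)
    (hbound : ∀ x ∈ I, |a x * g' x| ≤ N)
    (hHolder : ∀ s ∈ I, ∀ t ∈ I, |∫ r in s..t, (a r)⁻¹| ≤ M * |t - s| ^ δ)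
    {u v : ℝ} (hu : u ∈ I) (hv : v ∈ I) :
    |g v - g u| ≤ N * M * |v - u| ^ δ := by
  wlog huv : u ≤ v generalizing u v
  · rw [abs_sub_comm, abs_sub_comm v]
    exact this hv hu (le_of_not_ge huv)
  have hN : 0 ≤ N := (abs_nonneg _).trans (hbound u hu)
  have hsub : Icc u v ⊆ I := hI.out hu hv
  have hbound' : ∀ x ∈ I, |g' x| ≤ N * (a x)⁻¹ := fun x hx => by
    rw [le_mul_inv_iff₀ (hapos x hx), mul_comm, ← abs_of_pos (hapos x hx), ← abs_mul]
    exact hbound x hx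
  have hint : IntegrableOn (fun x => N * (a x)⁻¹) (Icc u v) :=
    (continuousOn_const.mul ((ha.mono hsub).inv₀ fun x hx => (hapos x (hsub hx)).ne')
      ).integrableOn_Icc
  calc |g v - g u| ≤ ∫ x in u..v, N * (a x)⁻¹ :=
        abs_sub_le_integral_of_abs_deriv_le huv
          (fun x hx => (hg x (hsub hx)).continuousAt.continuousWithinAt)
          (fun x hx => hg x (hsub (Ioo_subset_Icc_self hx))) hint
          fun x hx => hbound' x (hsub (Ioo_subset_Icc_self hx))
    _ = N * ∫ x in u..v, (a x)⁻¹ := integral_const_mul _ _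
    _ ≤ N * (M * |v - u| ^ δ) :=
        mul_le_mul_of_nonneg_left ((le_abs_self _).trans (hHolder u hu v hv)) hN
    _ = N * M * |v - u| ^ δ := (mul_assoc _ _ _).symm

theorem exists_mem_Ioo_abs_deriv_le_two_mul_div {f f' : ℝ → ℝ} {p q F : ℝ} (hpq : p < q)
    (hf : ContinuousOn f (Icc p q)) (hf' : ∀ x ∈ Ioo p q, HasDerivAt f (f' x) x)
    (hFp : |f p| ≤ F) (hFq : |f q| ≤ F) :
    ∃ c ∈ Ioo p q, |f' c| ≤ 2 * F / (q - p) := by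
  obtain ⟨c, hc, hslope⟩ := exists_hasDerivAt_eq_slope f f' hpq hf hf'
  refine ⟨c, hc, ?_⟩
  rw [hslope, abs_div, abs_of_pos (sub_pos.2 hpq)]
  gcongr
  linarith [abs_sub (f q) (f p)]

theorem exists_near_abs_deriv_le_two_mul_div {f f' : ℝ → ℝ} {p q F h s : ℝ} (hh : 0 < h)
    (hhpq : 2 * h ≤ q - p) (hf : ContinuousOn f (Icc p q))
    (hf' : ∀ x ∈ Ioo p q, HasDerivAt f (f' x) x) (hF : ∀ x ∈ Icc p q, |f x| ≤ F)
    (hs : s ∈ Icc p q) :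
    ∃ c ∈ Ioo p q, |s - c| ≤ h ∧ |f' c| ≤ 2 * F / h := by
  have key : ∀ x ∈ Icc p q, ∀ y ∈ Icc p q, y - x = h →
      ∃ c ∈ Ioo x y, |f' c| ≤ 2 * F / h := fun x hx y hy hxy => by
    rw [← hxy]
    exact exists_mem_Ioo_abs_deriv_le_two_mul_div (by linarith)
      (hf.mono (Icc_subset_Icc hx.1 hy.2))
      (fun z hz => hf' z ⟨hx.1.trans_lt hz.1, hz.2.trans_le hy.2⟩) (hF x hx) (hF y hy)
  rcases le_or_gt s ((p + q) / 2) with hmid | hmid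
  · obtain ⟨c, hc, hfc⟩ := key s hs (s + h) ⟨by linarith [hs.1], by linarith⟩ (by ring)
    exact ⟨c, ⟨hs.1.trans_lt hc.1, by linarith [hc.2]⟩,
      abs_le.2 ⟨by linarith [hc.2], by linarith [hc.1]⟩, hfc⟩
  · obtain ⟨c, hc, hfc⟩ := key (s - h) ⟨by linarith, by linarith [hs.2]⟩ s hs (by ring)
    exact ⟨c, ⟨by linarith [hc.1], hc.2.trans_le hs.2⟩,
      abs_le.2 ⟨by linarith [hc.2], by linarith [hc.1]⟩, hfc⟩

theorem two_lt_rpow_one_div_one_add {δ ρ : ℝ} (hδ : 0 < δ) (hρ : 2 ^ (1 + δ) < ρ) :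
    2 < ρ ^ (1 / (1 + δ)) := by
  have h2 : ((2 : ℝ) ^ (1 + δ)) ^ (1 / (1 + δ)) = 2 := by
    rw [← Real.rpow_mul zero_le_two, mul_one_div_cancel (by positivity), Real.rpow_one]
  calc (2 : ℝ) = ((2 : ℝ) ^ (1 + δ)) ^ (1 / (1 + δ)) := h2.symm
    _ < ρ ^ (1 / (1 + δ)) := Real.rpow_lt_rpow (by positivity) hρ (by positivity)

theorem inv_rpow_one_div_one_add_rpow {δ ρ : ℝ} (hδ : 1 + δ ≠ 0) (hρ : 0 ≤ ρ) :
    ((ρ ^ (1 / (1 + δ)))⁻¹) ^ δ = ρ ^ (1 / (1 + δ) - 1) := by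
  rw [← Real.rpow_neg hρ, ← Real.rpow_mul hρ]
  congr 1
  field_simp
  ring

theorem stmt_12_general (f f' f'' a : ℝ → ℝ) (δ M : ℝ)
    (hδ1 : 0 < δ) (hM : 0 ≤ M)
    (hf : ContinuousOn f (Set.Icc 0 1))
    (hf' : ∀ x ∈ Set.Ioo (0 : ℝ) 1, HasDerivAt f (f' x) x)
    (hf'' : ∀ x ∈ Set.Ioo (0 : ℝ) 1, HasDerivAt f' (f'' x) x)
    (ha : ContinuousOn a (Set.Ioo 0 1))
    (hapos : ∀ r ∈ Set.Ioo (0 : ℝ) 1, 0 < a r)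
    (hbdd : BddAbove ((fun r => |a r * f'' r|) '' Set.Ioo (0 : ℝ) 1))
    (hHolder : ∀ s ∈ Set.Ioo (0 : ℝ) 1, ∀ t ∈ Set.Ioo (0 : ℝ) 1,
      |∫ r in s..t, (a r)⁻¹| ≤ M * |t - s| ^ δ) :
    ∀ ρ : ℝ, (2 : ℝ) ^ (1 + δ) < ρ → ∀ s ∈ Set.Ioo (0 : ℝ) 1,
      |f' s| ≤ (M + 2) *
        (ρ ^ (1 / (1 + δ)) * sSup ((fun t => |f t|) '' Set.Icc (0 : ℝ) 1) +
          ρ ^ (1 / (1 + δ) - 1) * sSup ((fun r => |a r * f'' r|) '' Set.Ioo (0 : ℝ) 1)) := by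
  intro ρ hρ s hs
  set α : ℝ := 1 / (1 + δ)
  set F : ℝ := sSup ((fun t => |f t|) '' Icc (0 : ℝ) 1)
  set N : ℝ := sSup ((fun r => |a r * f'' r|) '' Ioo (0 : ℝ) 1)
  have hF : ∀ t ∈ Icc (0 : ℝ) 1, |f t| ≤ F := fun t ht =>
    le_csSup (isCompact_Icc.image_of_continuousOn hf.abs).bddAbove ⟨t, ht, rfl⟩
  have hN : ∀ r ∈ Ioo (0 : ℝ) 1, |a r * f'' r| ≤ N := fun r hr =>
    le_csSup hbdd ⟨r, hr, rfl⟩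
  have hF0 : 0 ≤ F := (abs_nonneg _).trans (hF s (Ioo_subset_Icc_self hs))
  have hN0 : 0 ≤ N := (abs_nonneg _).trans (hN s hs)
  have hρα : 2 < ρ ^ α := two_lt_rpow_one_div_one_add hδ1 hρ
  have hρ0 : 0 < ρ := lt_trans (by positivity) hρ
  have hρα1 : 0 < ρ ^ (α - 1) := Real.rpow_pos_of_pos hρ0 _
  obtain ⟨c, hc, hcs, hfc⟩ := exists_near_abs_deriv_le_two_mul_div (h := (ρ ^ α)⁻¹)
    (by positivity) (by rw [sub_zero, ← div_eq_mul_inv, div_le_one (by linarith)]; linarith)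
    hf hf' hF
    (Ioo_subset_Icc_self hs)
  have hdiff := abs_sub_le_of_abs_mul_deriv_le_of_integral_inv_le ordConnected_Ioo hf'' ha hapos
    hN hHolder hc hs
  calc |f' s| ≤ |f' c| + |f' s - f' c| := by
        linarith [abs_sub_abs_le_abs_sub (f' s) (f' c)]
    _ ≤ 2 * F / (ρ ^ α)⁻¹ + N * M * ((ρ ^ α)⁻¹) ^ δ :=
        add_le_add hfc (hdiff.trans (by gcongr))
    _ = 2 * F * ρ ^ α + N * M * ρ ^ (α - 1) := by
        rw [inv_rpow_one_div_one_add_rpow (by positivity) hρ0.le, div_inv_eq_mul]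
    _ ≤ (M + 2) * (ρ ^ α * F + ρ ^ (α - 1) * N) := by
        nlinarith [mul_nonneg hM (mul_nonneg hF0 (by linarith : (0 : ℝ) ≤ ρ ^ α)),
          mul_nonneg hN0 hρα1.le]

/-- **Gradient estimate under a Hölder condition on the antiderivative of `1/a`.**
Let `f : [0,1] → ℝ` be continuous and twice differentiable on `(0,1)`, let
`a : (0,1) → (0,∞)` be continuous with `N = sup_{r ∈ (0,1)} |a(r) f''(r)| < ∞`, and
suppose `|∫_s^t dr/a(r)| ≤ M |t-s|^δ` for all `s, t ∈ (0,1)`, where `δ ∈ (0,1]`, `M ≥ 0`.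
Set `α = 1/(1+δ)`.  Then for every `ρ > 2^{1+δ}` and every `s ∈ (0,1)`:
`|f'(s)| ≤ (M+2) (ρ^α sup_{t ∈ [0,1]} |f(t)| + ρ^{α-1} N)`. -/
theorem stmt_12 (f f' f'' a : ℝ → ℝ) (δ M : ℝ)
    (hδ1 : 0 < δ) (hδ2 : δ ≤ 1) (hM : 0 ≤ M)
    (hf : ContinuousOn f (Set.Icc 0 1))
    (hf' : ∀ x ∈ Set.Ioo (0 : ℝ) 1, HasDerivAt f (f' x) x)
    (hf'' : ∀ x ∈ Set.Ioo (0 : ℝ) 1, HasDerivAt f' (f'' x) x)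
    (ha : ContinuousOn a (Set.Ioo 0 1))
    (hapos : ∀ r ∈ Set.Ioo (0 : ℝ) 1, 0 < a r)
    (hbdd : BddAbove ((fun r => |a r * f'' r|) '' Set.Ioo (0 : ℝ) 1))
    (hHolder : ∀ s ∈ Set.Ioo (0 : ℝ) 1, ∀ t ∈ Set.Ioo (0 : ℝ) 1,
      |∫ r in s..t, (a r)⁻¹| ≤ M * |t - s| ^ δ) :
    ∀ ρ : ℝ, (2 : ℝ) ^ (1 + δ) < ρ → ∀ s ∈ Set.Ioo (0 : ℝ) 1,
      |f' s| ≤ (M + 2) *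
        (ρ ^ (1 / (1 + δ)) * sSup ((fun t => |f t|) '' Set.Icc (0 : ℝ) 1) +
          ρ ^ (1 / (1 + δ) - 1) * sSup ((fun r => |a r * f'' r|) '' Set.Ioo (0 : ℝ) 1)) :=
  stmt_12_general f f' f'' a δ M hδ1 hM hf hf' hf'' ha hapos hbdd hHolder
end

section
/- Let f : [0,1] → ℝ be continuous and twice differentiable on (0,1), and let a : (0,1) → (0,∞) be continuous with ∫₀¹ dr/a(r) < ∞ and N := sup_{r∈(0,1)} |a(r)·f''(r)| < ∞. Then f'' is Lebesgue integrable on (0,1), f'(t) − f'(s) = ∫_s^t f''(r) dr for all s, t ∈ (0,1), and f' has finite limits at 0⁺ and at 1⁻; in particular f' extends to a continuous function on [0,1]. -/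
/-!
Since `|f''| ≤ N / a` on `(0,1)` and `1/a` is integrable, so is `f''`. Then, for a fixed
`c ∈ (0,1)`, `f'` is `f' c` plus the primitive `x ↦ ∫_c^x f''` of an integrable function, and
such a primitive is continuous on the closed interval `[0,1]`.
-/

open MeasureTheory Set Filter Topology

theorem aestronglyMeasurable_of_hasDerivAt {f f' : ℝ → ℝ} {s : Set ℝ} (μ : Measure ℝ)
    (hs : MeasurableSet s) (hf : ∀ x ∈ s, HasDerivAt f (f' x) x) :
    AEStronglyMeasurable f' (μ.restrict s) :=
  (aestronglyMeasurable_deriv f _).congr <| by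
    filter_upwards [ae_restrict_mem hs] with x hx using (hf x hx).deriv

theorem MeasureTheory.IntegrableOn.of_abs_mul_le {α : Type*} [MeasurableSpace α] {μ : Measure α}
    {s : Set α} {g w : α → ℝ} {N : ℝ} (hw : IntegrableOn (fun x => (w x)⁻¹) s μ)
    (hs : MeasurableSet s) (hw_pos : ∀ x ∈ s, 0 < w x) (hN : ∀ x ∈ s, |w x * g x| ≤ N)
    (hg : AEStronglyMeasurable g (μ.restrict s)) : IntegrableOn g s μ :=
  Integrable.mono' (hw.const_mul N) hg <| by
    filter_upwards [ae_restrict_mem hs] with x hx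
    have hwx := hw_pos x hx
    rw [Real.norm_eq_abs, le_mul_inv_iff₀ hwx]
    calc |g x| * w x = |w x * g x| := by rw [abs_mul, abs_of_pos hwx, mul_comm]
      _ ≤ N := hN x hx

section Primitive

variable {E : Type*} [NormedAddCommGroup E] [NormedSpace ℝ E] [CompleteSpace E]

theorem sub_eq_integral_of_hasDerivAt_of_integrableOn {f f' : ℝ → E} {I : Set ℝ}
    (hI : I.OrdConnected) (hf : ∀ x ∈ I, HasDerivAt f (f' x) x) (hint : IntegrableOn f' I)
    {s t : ℝ} (hs : s ∈ I) (ht : t ∈ I) : f t - f s = ∫ r in s..t, f' r :=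
  (intervalIntegral.integral_eq_sub_of_hasDerivAt (fun x hx => hf x (hI.uIcc_subset hs ht hx))
    (hint.mono_set (hI.uIcc_subset hs ht)).intervalIntegrable).symm

theorem exists_continuousOn_Icc_eqOn_Ioo_of_hasDerivAt {f f' : ℝ → E} {a b : ℝ} (hab : a < b)
    (hf : ∀ x ∈ Ioo a b, HasDerivAt f (f' x) x) (hint : IntegrableOn f' (Ioo a b)) :
    ∃ g : ℝ → E, ContinuousOn g (Icc a b) ∧ EqOn g f (Ioo a b) := by
  obtain ⟨c, hc⟩ := nonempty_Ioo.2 hab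
  refine ⟨fun x => f c + ∫ r in c..x, f' r, ?_, fun x hx => ?_⟩
  · have hint' : IntervalIntegrable f' volume a b :=
      (intervalIntegrable_iff_integrableOn_Ioo_of_le hab.le).mpr hint
    have := intervalIntegral.continuousOn_primitive_interval' hint'
      (by rw [uIcc_of_le hab.le]; exact Ioo_subset_Icc_self hc)
    rw [uIcc_of_le hab.le] at this
    exact continuousOn_const.add this
  · dsimp only
    rw [← sub_eq_integral_of_hasDerivAt_of_integrableOn ordConnected_Ioo hf hint hc hx,
      add_sub_cancel]

end Primitive

theorem ContinuousOn.tendsto_nhdsWithin_of_eqOn {X Y : Type*} [TopologicalSpace X]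
    [TopologicalSpace Y] {f g : X → Y} {s t : Set X} {x : X} (hg : ContinuousOn g t)
    (hst : s ⊆ t) (hgf : EqOn g f s) (hx : x ∈ t) : Tendsto f (𝓝[s] x) (𝓝 (g x)) :=
  ((hg x hx).mono hst).congr' (eventuallyEq_nhdsWithin_of_eqOn hgf)

theorem stmt_13_general (f' f'' a : ℝ → ℝ)
    (hf'' : ∀ x ∈ Set.Ioo (0 : ℝ) 1, HasDerivAt f' (f'' x) x)
    (hapos : ∀ r ∈ Set.Ioo (0 : ℝ) 1, 0 < a r)
    (hainv : IntegrableOn (fun r => (a r)⁻¹) (Set.Ioo (0 : ℝ) 1) volume)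
    (hbdd : BddAbove ((fun r => |a r * f'' r|) '' Set.Ioo (0 : ℝ) 1)) :
    IntegrableOn f'' (Set.Ioo (0 : ℝ) 1) volume ∧
    (∀ s ∈ Set.Ioo (0 : ℝ) 1, ∀ t ∈ Set.Ioo (0 : ℝ) 1,
      f' t - f' s = ∫ r in s..t, f'' r) ∧
    (∃ l₀ : ℝ, Filter.Tendsto f' (nhdsWithin 0 (Set.Ioo (0 : ℝ) 1)) (nhds l₀)) ∧
    (∃ l₁ : ℝ, Filter.Tendsto f' (nhdsWithin 1 (Set.Ioo (0 : ℝ) 1)) (nhds l₁)) ∧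
    (∃ g : ℝ → ℝ, ContinuousOn g (Set.Icc (0 : ℝ) 1) ∧
      ∀ s ∈ Set.Ioo (0 : ℝ) 1, g s = f' s) := by
  obtain ⟨N, hN⟩ := hbdd
  have hint : IntegrableOn f'' (Ioo 0 1) :=
    hainv.of_abs_mul_le measurableSet_Ioo hapos (fun r hr => hN (mem_image_of_mem _ hr))
      (aestronglyMeasurable_of_hasDerivAt _ measurableSet_Ioo hf'')
  obtain ⟨g, hg, hgf'⟩ := exists_continuousOn_Icc_eqOn_Ioo_of_hasDerivAt zero_lt_one hf'' hint
  refine ⟨hint, fun s hs t ht => sub_eq_integral_of_hasDerivAt_of_integrableOn ordConnected_Ioo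
    hf'' hint hs ht, ⟨g 0, ?_⟩, ⟨g 1, ?_⟩, g, hg, hgf'⟩
  · exact hg.tendsto_nhdsWithin_of_eqOn Ioo_subset_Icc_self hgf' (left_mem_Icc.2 zero_le_one)
  · exact hg.tendsto_nhdsWithin_of_eqOn Ioo_subset_Icc_self hgf' (right_mem_Icc.2 zero_le_one)

/-- **Continuous extension of the derivative up to the boundary.**
Let `f : [0,1] → ℝ` be continuous and twice differentiable on `(0,1)`, and let
`a : (0,1) → (0,∞)` be continuous with `∫₀¹ dr/a(r) < ∞` and
`N = sup_{r ∈ (0,1)} |a(r) f''(r)| < ∞`.  Then `f''` is Lebesgue integrable on `(0,1)`,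
`f'(t) - f'(s) = ∫_s^t f''(r) dr` for all `s, t ∈ (0,1)`, and `f'` has finite limits at
`0⁺` and `1⁻`; in particular `f'` extends to a continuous function on `[0,1]`. -/
theorem stmt_13 (f f' f'' a : ℝ → ℝ)
    (hf : ContinuousOn f (Set.Icc 0 1))
    (hf' : ∀ x ∈ Set.Ioo (0 : ℝ) 1, HasDerivAt f (f' x) x)
    (hf'' : ∀ x ∈ Set.Ioo (0 : ℝ) 1, HasDerivAt f' (f'' x) x)
    (ha : ContinuousOn a (Set.Ioo 0 1))
    (hapos : ∀ r ∈ Set.Ioo (0 : ℝ) 1, 0 < a r)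
    (hainv : IntegrableOn (fun r => (a r)⁻¹) (Set.Ioo (0 : ℝ) 1) volume)
    (hbdd : BddAbove ((fun r => |a r * f'' r|) '' Set.Ioo (0 : ℝ) 1)) :
    IntegrableOn f'' (Set.Ioo (0 : ℝ) 1) volume ∧
    (∀ s ∈ Set.Ioo (0 : ℝ) 1, ∀ t ∈ Set.Ioo (0 : ℝ) 1,
      f' t - f' s = ∫ r in s..t, f'' r) ∧
    (∃ l₀ : ℝ, Filter.Tendsto f' (nhdsWithin 0 (Set.Ioo (0 : ℝ) 1)) (nhds l₀)) ∧
    (∃ l₁ : ℝ, Filter.Tendsto f' (nhdsWithin 1 (Set.Ioo (0 : ℝ) 1)) (nhds l₁)) ∧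
    (∃ g : ℝ → ℝ, ContinuousOn g (Set.Icc (0 : ℝ) 1) ∧
      ∀ s ∈ Set.Ioo (0 : ℝ) 1, g s = f' s) :=
  stmt_13_general f' f'' a hf'' hapos hainv hbdd
end

section
/- For every λ > 0 and every p ∈ [1, ∞): λ^{(p+1)/(2p)} · ( ∫₀^π |sinh(√λ·(s − π)) / (√λ · cosh(π√λ))|^p ds )^{1/p} ≤ 1. In fact the left-hand side is bounded by e^{π√λ} / (2·p^{1/p}·cosh(π√λ)) ≤ 1. -/
/-!
Since `|sinh x| ≤ e^{|x|}/2`, the `p`-th power of the kernel is dominated by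
`e^{pμ(π-s)} / (2μ cosh(πμ))^p` with `μ = √λ`, whose integral over `[0,π]` is at most
`e^{pμπ} / (pμ (2μ cosh(πμ))^p)`. Taking the `1/p`-th power and multiplying by
`λ^{(p+1)/(2p)} = μ^{1+1/p}` cancels every power of `μ`; the final bound is `≤ 1` because
`e^{πμ} ≤ 2 cosh(πμ)` and `p^{1/p} ≥ 1`.
-/

open Real intervalIntegral

lemma abs_sinh_le_exp_abs_div_two (x : ℝ) : |sinh x| ≤ exp |x| / 2 := by
  rw [abs_sinh, sinh_eq]
  linarith [exp_pos (-|x|)]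

lemma exp_le_two_mul_cosh (x : ℝ) : exp x ≤ 2 * cosh x := by
  rw [cosh_eq]
  linarith [exp_pos (-x)]

lemma integral_exp_mul_sub (k a : ℝ) (hk : k ≠ 0) :
    ∫ s in (0 : ℝ)..a, exp (k * (a - s)) = (exp (k * a) - 1) / k := by
  have hderiv : ∀ s, HasDerivAt (fun s => -exp (k * (a - s)) / k) (exp (k * (a - s))) s :=
    fun s => ((((hasDerivAt_id s).const_sub a).const_mul k).exp.neg.div_const k).congr_deriv
      (by simp [field])
  rw [integral_eq_sub_of_hasDerivAt (fun s _ => hderiv s)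
    ((by fun_prop : Continuous _).intervalIntegrable _ _)]
  simp only [sub_self, mul_zero, exp_zero, sub_zero]
  ring

lemma integral_abs_sinh_rpow_le {μ a p : ℝ} (hμ : 0 < μ) (ha : 0 ≤ a) (hp : 0 < p) :
    ∫ s in (0 : ℝ)..a, |sinh (μ * (s - a))| ^ p ≤ exp (p * μ * a) / (2 ^ p * (p * μ)) := by
  have hpointwise : ∀ s ∈ Set.Icc 0 a,
      |sinh (μ * (s - a))| ^ p ≤ exp (p * μ * (a - s)) / 2 ^ p := by
    intro s hs
    have habs : |μ * (s - a)| = μ * (a - s) := by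
      rw [abs_mul, abs_of_pos hμ, abs_of_nonpos (by linarith [hs.2]), neg_sub]
    calc |sinh (μ * (s - a))| ^ p ≤ (exp (μ * (a - s)) / 2) ^ p := by
          gcongr
          simpa only [habs] using abs_sinh_le_exp_abs_div_two (μ * (s - a))
      _ = exp (p * μ * (a - s)) / 2 ^ p := by
          rw [div_rpow (exp_pos _).le zero_le_two, ← exp_mul]
          ring_nf
  calc ∫ s in (0 : ℝ)..a, |sinh (μ * (s - a))| ^ p
      ≤ ∫ s in (0 : ℝ)..a, exp (p * μ * (a - s)) / 2 ^ p :=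
        integral_mono_on ha
          ((by fun_prop (disch := positivity) : Continuous _).intervalIntegrable _ _)
          ((by fun_prop : Continuous _).intervalIntegrable _ _) hpointwise
    _ = (exp (p * μ * a) - 1) / (p * μ) / 2 ^ p := by
        rw [integral_div, integral_exp_mul_sub _ _ (by positivity)]
    _ ≤ exp (p * μ * a) / (p * μ) / 2 ^ p := by
        gcongr
        linarith
    _ = exp (p * μ * a) / (2 ^ p * (p * μ)) := by ring

lemma rpow_integral_abs_sinh_rpow_le {μ a p : ℝ} (hμ : 0 < μ) (ha : 0 ≤ a) (hp : 0 < p) :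
    (∫ s in (0 : ℝ)..a, |sinh (μ * (s - a))| ^ p) ^ (1 / p) ≤
      exp (μ * a) / (2 * (p * μ) ^ (1 / p)) := by
  have hint : 0 ≤ ∫ s in (0 : ℝ)..a, |sinh (μ * (s - a))| ^ p :=
    integral_nonneg ha fun s _ => by positivity
  calc (∫ s in (0 : ℝ)..a, |sinh (μ * (s - a))| ^ p) ^ (1 / p)
      ≤ (exp (p * μ * a) / (2 ^ p * (p * μ))) ^ (1 / p) := by
        gcongr
        exact integral_abs_sinh_rpow_le hμ ha hp
    _ = exp (μ * a) / (2 * (p * μ) ^ (1 / p)) := by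
        rw [div_rpow (exp_pos _).le (by positivity), mul_rpow (by positivity) (by positivity),
          ← exp_mul, ← rpow_mul zero_le_two, mul_one_div_cancel hp.ne', rpow_one]
        congr 2
        field_simp

lemma rpow_integral_abs_div_rpow {f : ℝ → ℝ} {a b p D : ℝ} (hab : a ≤ b) (hp : p ≠ 0)
    (hD : 0 < D) :
    (∫ s in a..b, |f s / D| ^ p) ^ (1 / p) = (∫ s in a..b, |f s| ^ p) ^ (1 / p) / D := by
  simp_rw [abs_div, abs_of_pos hD, div_rpow (abs_nonneg _) hD.le]
  rw [integral_div, div_rpow (integral_nonneg hab fun s _ => by positivity) (by positivity),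
    ← rpow_mul hD.le, mul_one_div_cancel hp, rpow_one]

/-- **Uniform bound on the Dirichlet operators `λ^{(p+1)/(2p)} L_λ`.**
For every `λ > 0` and `p ∈ [1,∞)`:
`λ^{(p+1)/(2p)} (∫₀^π |sinh(√λ (s-π)) / (√λ cosh(π √λ))|^p ds)^{1/p}
  ≤ e^{π √λ} / (2 p^{1/p} cosh(π √λ)) ≤ 1`. -/
theorem stmt_15 (l p : ℝ) (hl : 0 < l) (hp : 1 ≤ p) :
    l ^ ((p + 1) / (2 * p)) *
        (∫ s in (0 : ℝ)..Real.pi,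
            |Real.sinh (Real.sqrt l * (s - Real.pi)) /
              (Real.sqrt l * Real.cosh (Real.pi * Real.sqrt l))| ^ p) ^ (1 / p) ≤
      Real.exp (Real.pi * Real.sqrt l) /
        (2 * p ^ (1 / p) * Real.cosh (Real.pi * Real.sqrt l)) ∧
    Real.exp (Real.pi * Real.sqrt l) /
        (2 * p ^ (1 / p) * Real.cosh (Real.pi * Real.sqrt l)) ≤ 1 := by
  set μ := √l
  set c := cosh (π * μ)
  have hμ : 0 < μ := sqrt_pos.mpr hl
  have hp0 : 0 < p := by linarith
  have hprefactor : l ^ ((p + 1) / (2 * p)) = μ * μ ^ (1 / p) := by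
    rw [← sq_sqrt hl.le, ← rpow_natCast, ← rpow_mul (sqrt_nonneg l), ← rpow_one_add' hμ.le]
    · congr 1; field_simp; push_cast; ring
    · positivity
  refine ⟨?_, ?_⟩
  · rw [rpow_integral_abs_div_rpow pi_pos.le hp0.ne' (by positivity), hprefactor]
    calc μ * μ ^ (1 / p) *
          ((∫ s in (0 : ℝ)..π, |sinh (μ * (s - π))| ^ p) ^ (1 / p) / (μ * c))
        ≤ μ * μ ^ (1 / p) * (exp (μ * π) / (2 * (p * μ) ^ (1 / p)) / (μ * c)) := by
          gcongr
          exact rpow_integral_abs_sinh_rpow_le hμ pi_pos.le hp0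
      _ = exp (π * μ) / (2 * p ^ (1 / p) * c) := by
          rw [mul_rpow hp0.le hμ.le, mul_comm μ π]
          field_simp
  · rw [div_le_one (by positivity)]
    calc exp (π * μ) ≤ 2 * c := exp_le_two_mul_cosh _
      _ ≤ 2 * p ^ (1 / p) * c := by
          gcongr
          exact le_mul_of_one_le_right zero_le_two (one_le_rpow hp (by positivity))
end

section
/- Let 1 ≤ p < ∞, let ν be a finite positive Borel measure on [−π, 0], and let v : [−π,0] × [0,π] → ℝ be measurable with ∫_{[−π,0]} ∫₀^π |v(r,s)|^p ds dr < ∞. Then ∫₀^π ( ∫₀^π ∫_{[−π,−t]} |v(t + r, s)| dν(r) ds )^p dt ≤ π^{p−1} · (ν([−π,0]))^p · ∫_{[−π,0]} ∫₀^π |v(r,s)|^p ds dr. -/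
/-!
Hölder's inequality in the form `(∫ f dμ)^p ≤ μ(X)^(p-1) ∫ f^p dμ`, applied first in `s` over
`[0, π]` and then in `r` against `ν` on `[-π, -t] ⊆ [-π, 0]`, bounds the `t`-integrand by
`(π ν[-π,0])^(p-1) ∫∫ |v(t+r,s)|^p dν ds`. After exchanging the `t`- and `r`-integrals, for each
`r` the substitution `u = t + r` stays inside `[-π, 0]`, which produces the last factor
`ν[-π,0]`. The estimate is carried out for lower Lebesgue integrals, where Tonelli applies freely.
-/

open MeasureTheory
open scoped ENNReal

variable {α β : Type*} [MeasurableSpace α] [MeasurableSpace β]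

theorem lintegral_rpow_le_measure_univ_rpow_mul {μ : Measure α} {f : α → ℝ≥0∞}
    (hf : AEMeasurable f μ) {p : ℝ} (hp : 1 ≤ p) :
    (∫⁻ a, f a ∂μ) ^ p ≤ μ Set.univ ^ (p - 1) * ∫⁻ a, f a ^ p ∂μ := by
  have hp0 : 0 < p := zero_lt_one.trans_le hp
  have h := eLpNorm'_le_eLpNorm'_mul_rpow_measure_univ one_pos hp hf.aestronglyMeasurable
  simp only [eLpNorm'_eq_lintegral_enorm, enorm_eq_self, ENNReal.rpow_one, div_one] at h
  calc (∫⁻ a, f a ∂μ) ^ p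
      ≤ ((∫⁻ a, f a ^ p ∂μ) ^ (1 / p) * μ Set.univ ^ (1 - 1 / p)) ^ p := by gcongr
    _ = μ Set.univ ^ (p - 1) * ∫⁻ a, f a ^ p ∂μ := by
      rw [ENNReal.mul_rpow_of_nonneg _ _ hp0.le, ← ENNReal.rpow_mul, ← ENNReal.rpow_mul,
        one_div_mul_cancel hp0.ne', ENNReal.rpow_one, sub_mul, one_div_mul_cancel hp0.ne',
        one_mul, mul_comm]

theorem lintegral_lintegral_rpow_le {μ : Measure α} {ν : Measure β} [SFinite ν]
    {f : α → β → ℝ≥0∞} (hf : Measurable (Function.uncurry f)) {p : ℝ} (hp : 1 ≤ p) :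
    (∫⁻ x, ∫⁻ y, f x y ∂ν ∂μ) ^ p
      ≤ (μ Set.univ * ν Set.univ) ^ (p - 1) * ∫⁻ x, ∫⁻ y, f x y ^ p ∂ν ∂μ := by
  have hm : Measurable fun x => ∫⁻ y, f x y ^ p ∂ν := (hf.pow_const p).lintegral_prod_right'
  calc (∫⁻ x, ∫⁻ y, f x y ∂ν ∂μ) ^ p
      ≤ μ Set.univ ^ (p - 1) * ∫⁻ x, (∫⁻ y, f x y ∂ν) ^ p ∂μ :=
        lintegral_rpow_le_measure_univ_rpow_mul hf.lintegral_prod_right'.aemeasurable hp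
    _ ≤ μ Set.univ ^ (p - 1) * ∫⁻ x, ν Set.univ ^ (p - 1) * ∫⁻ y, f x y ^ p ∂ν ∂μ := by
        gcongr with x
        exact lintegral_rpow_le_measure_univ_rpow_mul hf.of_uncurry_left.aemeasurable hp
    _ = (μ Set.univ * ν Set.univ) ^ (p - 1) * ∫⁻ x, ∫⁻ y, f x y ^ p ∂ν ∂μ := by
        rw [lintegral_const_mul _ hm, ENNReal.mul_rpow_of_nonneg _ _ (sub_nonneg.2 hp), mul_assoc]

theorem ofReal_integral_integral_abs_rpow_eq {μ : Measure α} {ν : Measure β} [SFinite μ]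
    [SFinite ν] {f : α → β → ℝ} {p : ℝ} (hp : 0 ≤ p)
    (hf : Integrable (fun q : α × β => |f q.1 q.2| ^ p) (μ.prod ν)) :
    ENNReal.ofReal (∫ x, ∫ y, |f x y| ^ p ∂ν ∂μ) = ∫⁻ x, ∫⁻ y, ‖f x y‖ₑ ^ p ∂ν ∂μ := by
  rw [← integral_prod _ hf,
    ofReal_integral_eq_lintegral_ofReal hf (.of_forall fun _ => by positivity),
    lintegral_prod _ hf.aemeasurable.ennreal_ofReal]
  simp only [← ENNReal.ofReal_rpow_of_nonneg (abs_nonneg _) hp, Real.enorm_eq_ofReal_abs]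

theorem lintegral_Icc_lintegral_Icc_add_le (ν : Measure ℝ) [SFinite ν] {W : ℝ → ℝ≥0∞}
    (hW : Measurable W) (a : ℝ) :
    ∫⁻ t in Set.Icc 0 a, ∫⁻ r in Set.Icc (-a) (-t), W (t + r) ∂ν
      ≤ ν (Set.Icc (-a) 0) * ∫⁻ u in Set.Icc (-a) 0, W u := by
  set I := Set.Icc (-a) 0
  have hshift : ∀ t ∈ Set.Icc 0 a,
      ∫⁻ r in Set.Icc (-a) (-t), W (t + r) ∂ν ≤ ∫⁻ r in I, I.indicator W (t + r) ∂ν := by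
    rintro t ⟨ht0, -⟩
    calc ∫⁻ r in Set.Icc (-a) (-t), W (t + r) ∂ν
        = ∫⁻ r in Set.Icc (-a) (-t), I.indicator W (t + r) ∂ν := by
          refine setLIntegral_congr_fun measurableSet_Icc fun r ⟨hr1, hr2⟩ => ?_
          rw [Set.indicator_of_mem (Set.mem_Icc.2 ⟨by linarith, by linarith⟩)]
      _ ≤ ∫⁻ r in I, I.indicator W (t + r) ∂ν :=
          lintegral_mono_set (Set.Icc_subset_Icc_right (by linarith))
  calc ∫⁻ t in Set.Icc 0 a, ∫⁻ r in Set.Icc (-a) (-t), W (t + r) ∂ν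
      ≤ ∫⁻ t in Set.Icc 0 a, ∫⁻ r in I, I.indicator W (t + r) ∂ν :=
        setLIntegral_mono' measurableSet_Icc hshift
    _ = ∫⁻ r in I, (∫⁻ t in Set.Icc 0 a, I.indicator W (t + r)) ∂ν :=
        lintegral_lintegral_swap (f := fun t r => I.indicator W (t + r))
          ((hW.indicator measurableSet_Icc).comp (measurable_fst.add measurable_snd)).aemeasurable
    _ ≤ ∫⁻ _ in I, (∫⁻ u in I, W u) ∂ν := by
        refine lintegral_mono fun r => (setLIntegral_le_lintegral _ _).trans_eq ?_
        rw [lintegral_add_right_eq_self (I.indicator W), lintegral_indicator measurableSet_Icc]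
    _ = ν I * ∫⁻ u in I, W u := by rw [setLIntegral_const, mul_comm]

theorem lintegral_rpow_lintegral_lintegral_Icc_add_le {μ : Measure β} [IsFiniteMeasure μ]
    (ν : Measure ℝ) [IsFiniteMeasure ν] {g : ℝ → β → ℝ≥0∞} (hg : Measurable (Function.uncurry g))
    {p : ℝ} (hp : 1 ≤ p) (a : ℝ) :
    ∫⁻ t in Set.Icc 0 a, (∫⁻ s, ∫⁻ r in Set.Icc (-a) (-t), g (t + r) s ∂ν ∂μ) ^ p
      ≤ μ Set.univ ^ (p - 1) * ν (Set.Icc (-a) 0) ^ p *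
          ∫⁻ u in Set.Icc (-a) 0, ∫⁻ s, g u s ^ p ∂μ := by
  have hp1 : 0 ≤ p - 1 := sub_nonneg.2 hp
  set I := Set.Icc (-a) 0
  set C := (μ Set.univ * ν I) ^ (p - 1) with hC
  have hgt : ∀ t, Measurable (Function.uncurry fun s r => g (t + r) s) := fun t =>
    hg.comp ((measurable_const.add measurable_snd).prodMk measurable_fst)
  have hHolder : ∀ t ∈ Set.Icc 0 a, (∫⁻ s, ∫⁻ r in Set.Icc (-a) (-t), g (t + r) s ∂ν ∂μ) ^ p
      ≤ C * ∫⁻ s, ∫⁻ r in Set.Icc (-a) (-t), g (t + r) s ^ p ∂ν ∂μ := by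
    rintro t ⟨ht, -⟩
    refine (lintegral_lintegral_rpow_le (hgt t) hp).trans ?_
    rw [Measure.restrict_apply_univ, hC]
    gcongr
    exact Set.Icc_subset_Icc_right (by linarith)
  have hC_ne_top : C ≠ ⊤ :=
    ENNReal.rpow_ne_top_of_nonneg hp1 (ENNReal.mul_ne_top (measure_ne_top _ _) (measure_ne_top _ _))
  have hνp : ν I ^ p = ν I ^ (p - 1) * ν I := by
    simpa using ENNReal.rpow_add_of_nonneg (x := ν I) (p - 1) 1 hp1 zero_le_one
  calc ∫⁻ t in Set.Icc 0 a, (∫⁻ s, ∫⁻ r in Set.Icc (-a) (-t), g (t + r) s ∂ν ∂μ) ^ p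
      ≤ ∫⁻ t in Set.Icc 0 a, C * ∫⁻ s, ∫⁻ r in Set.Icc (-a) (-t), g (t + r) s ^ p ∂ν ∂μ :=
        setLIntegral_mono' measurableSet_Icc hHolder
    _ = C * ∫⁻ t in Set.Icc 0 a, ∫⁻ r in Set.Icc (-a) (-t), (∫⁻ s, g (t + r) s ^ p ∂μ) ∂ν := by
        rw [lintegral_const_mul' _ _ hC_ne_top]
        congr 1
        exact lintegral_congr fun t => lintegral_lintegral_swap ((hgt t).pow_const p).aemeasurable
    _ ≤ C * (ν I * ∫⁻ u in I, ∫⁻ s, g u s ^ p ∂μ) := by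
        gcongr
        exact lintegral_Icc_lintegral_Icc_add_le ν (hg.pow_const p).lintegral_prod_right' a
    _ = μ Set.univ ^ (p - 1) * ν I ^ p * ∫⁻ u in I, ∫⁻ s, g u s ^ p ∂μ := by
        rw [hC, ENNReal.mul_rpow_of_nonneg _ _ hp1, hνp]
        ring

/-- **`p`-admissibility of the delay functional for the nilpotent left shift.**
Let `1 ≤ p < ∞`, let `ν` be a finite positive Borel measure on `[-π,0]`, and let
`v : [-π,0] × [0,π] → ℝ` be measurable with `∫_{[-π,0]} ∫₀^π |v(r,s)|^p ds dr < ∞`.  Then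
`∫₀^π (∫₀^π ∫_{[-π,-t]} |v(t+r,s)| dν(r) ds)^p dt
  ≤ π^{p-1} ν([-π,0])^p ∫_{[-π,0]} ∫₀^π |v(r,s)|^p ds dr`. -/
theorem stmt_16 (p : ℝ) (hp : 1 ≤ p) (ν : Measure ℝ) [IsFiniteMeasure ν]
    (v : ℝ → ℝ → ℝ) (hv : Measurable (Function.uncurry v))
    (hvint : IntegrableOn (fun q : ℝ × ℝ => |v q.1 q.2| ^ p)
      (Set.Icc (-Real.pi) 0 ×ˢ Set.Icc 0 Real.pi) volume) :
    ∫ t in Set.Icc (0 : ℝ) Real.pi,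
        (∫ s in Set.Icc (0 : ℝ) Real.pi,
            ∫ r in Set.Icc (-Real.pi) (-t), |v (t + r) s| ∂ν) ^ p
      ≤ Real.pi ^ (p - 1) * (ν (Set.Icc (-Real.pi) 0)).toReal ^ p *
          ∫ r in Set.Icc (-Real.pi) (0 : ℝ),
            ∫ s in Set.Icc (0 : ℝ) Real.pi, |v r s| ^ p := by
  have hp0 : 0 ≤ p := zero_le_one.trans hp
  have key := lintegral_rpow_lintegral_lintegral_Icc_add_le
    (μ := volume.restrict (Set.Icc 0 Real.pi)) (g := fun u s => ‖v u s‖ₑ) ν hv.enorm hp Real.pi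
  rw [Measure.restrict_apply_univ, Real.volume_Icc, sub_zero] at key
  have hint : Integrable (fun q : ℝ × ℝ => |v q.1 q.2| ^ p)
      ((volume.restrict (Set.Icc (-Real.pi) 0)).prod (volume.restrict (Set.Icc 0 Real.pi))) := by
    rwa [Measure.prod_restrict, ← Measure.volume_eq_prod]
  have henorm : ∀ t : ℝ,
      ‖(∫ s in Set.Icc 0 Real.pi, ∫ r in Set.Icc (-Real.pi) (-t), |v (t + r) s| ∂ν) ^ p‖ₑ
        ≤ (∫⁻ s in Set.Icc 0 Real.pi, ∫⁻ r in Set.Icc (-Real.pi) (-t), ‖v (t + r) s‖ₑ ∂ν) ^ p := by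
    intro t
    rw [Real.enorm_rpow_of_nonneg (by positivity) hp0]
    gcongr
    refine (enorm_integral_le_lintegral_enorm _).trans (lintegral_mono fun s => ?_)
    exact (enorm_integral_le_lintegral_enorm _).trans_eq (by simp)
  rw [← ENNReal.ofReal_le_ofReal_iff (by positivity), ENNReal.ofReal_mul (by positivity),
    ENNReal.ofReal_mul (by positivity),
    ← ENNReal.ofReal_rpow_of_nonneg Real.pi_pos.le (by linarith),
    ← ENNReal.ofReal_rpow_of_nonneg ENNReal.toReal_nonneg hp0,
    ENNReal.ofReal_toReal (measure_ne_top _ _), ofReal_integral_integral_abs_rpow_eq hp0 hint]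
  exact (Real.ofReal_le_enorm _).trans
    (((enorm_integral_le_lintegral_enorm _).trans (lintegral_mono henorm)).trans key)
end

section
/- Let X and ∂X be complex Banach spaces, λ₀ > 0, and α ∈ (0,1]. For each λ > λ₀ let N_λ ⊆ X be a linear subspace and L_λ : ∂X → X a bounded linear operator with range exactly N_λ, and let L be a linear map, defined on a subspace of X containing all N_λ, with values in ∂X, such that L(L_λ x) = x for every λ > λ₀ and every x ∈ ∂X. Then the following are equivalent: (a) for every x ∈ ∂X, sup_{λ>λ₀} λ^α·‖L_λ x‖ < ∞; (b) there exists M > 0 such that ‖Ly‖ ≥ M·λ^α·‖y‖ for all λ > λ₀ and all y ∈ N_λ. -/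
/-!
Since `L` inverts `L_λ` on `N_λ = range L_λ`, the lower bound (b) with constant `M` says exactly
that `M λ^α ‖L_λ x‖ ≤ ‖x‖` for all `x`, i.e. that the operators `λ^α L_λ` are uniformly bounded.
By the uniform boundedness principle on the Banach space `∂X`, this is equivalent to their
pointwise boundedness (a).
-/

section

variable {𝕜 E F : Type*} [RCLike 𝕜]
  [NormedAddCommGroup E] [NormedSpace 𝕜 E] [NormedAddCommGroup F] [NormedSpace 𝕜 F]

theorem exists_pos_mul_le_norm_iff_forall_exists_bound [CompleteSpace E] {ι : Type*}
    (T : ι → E →L[𝕜] F) (w : ι → ℝ) (hw : ∀ i, 0 ≤ w i) :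
    (∀ x, ∃ C, ∀ i, w i * ‖T i x‖ ≤ C) ↔ ∃ M, 0 < M ∧ ∀ i x, M * (w i * ‖T i x‖) ≤ ‖x‖ := by
  have hnorm : ∀ i x, ‖((w i : 𝕜) • T i) x‖ = w i * ‖T i x‖ := fun i x => by
    rw [smul_apply, norm_smul, RCLike.norm_ofReal, abs_of_nonneg (hw i)]
  constructor
  · intro hbdd
    obtain ⟨C, hC⟩ := banach_steinhaus (g := fun i => (w i : 𝕜) • T i) fun x => by
      simpa only [hnorm] using hbdd x
    refine ⟨(max C 1)⁻¹, by positivity, fun i x => ?_⟩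
    rw [inv_mul_le_iff₀ (by positivity), ← hnorm]
    calc ‖((w i : 𝕜) • T i) x‖ ≤ C * ‖x‖ := ContinuousLinearMap.le_of_opNorm_le _ (hC i) x
      _ ≤ max C 1 * ‖x‖ := by gcongr; exact le_max_left C 1
  · rintro ⟨M, hM, hle⟩ x
    exact ⟨‖x‖ / M, fun i => by rw [le_div_iff₀ hM, mul_comm]; exact hle i x⟩

theorem forall_range_mul_norm_le_norm_iff {D : Submodule 𝕜 F} {L : D →ₗ[𝕜] E} {T : E → F}
    (hTD : ∀ x, T x ∈ D) (hLT : ∀ x (h : T x ∈ D), L ⟨T x, h⟩ = x) (c : ℝ) :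
    (∀ y : D, (y : F) ∈ Set.range T → c * ‖(y : F)‖ ≤ ‖L y‖) ↔ ∀ x, c * ‖T x‖ ≤ ‖x‖ := by
  constructor
  · intro h x
    simpa only [hLT] using h ⟨T x, hTD x⟩ ⟨x, rfl⟩
  · rintro h ⟨_, hy⟩ ⟨x, rfl⟩
    simpa only [hLT] using h x

end

theorem stmt_18_general {X dX : Type*} [NormedAddCommGroup X] [NormedSpace ℂ X]
    [NormedAddCommGroup dX] [NormedSpace ℂ dX] [CompleteSpace dX]
    (lam0 : ℝ) (hlam0 : 0 < lam0) (α : ℝ)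
    (N : ℝ → Submodule ℂ X) (Ll : ℝ → dX →L[ℂ] X)
    (Dm : Submodule ℂ X) (L : Dm →ₗ[ℂ] dX)
    (hrange : ∀ l : ℝ, lam0 < l → Set.range (Ll l) = (N l : Set X))
    (hND : ∀ l : ℝ, lam0 < l → N l ≤ Dm)
    (hLLl : ∀ l : ℝ, lam0 < l → ∀ x : dX, ∀ h : Ll l x ∈ Dm, L ⟨Ll l x, h⟩ = x) :
    (∀ x : dX, ∃ C : ℝ, ∀ l : ℝ, lam0 < l → l ^ α * ‖Ll l x‖ ≤ C) ↔
      (∃ M : ℝ, 0 < M ∧ ∀ l : ℝ, lam0 < l → ∀ y : Dm, (y : X) ∈ N l →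
        M * (l ^ α * ‖(y : X)‖) ≤ ‖L y‖) := by
  have hlower : ∀ M, (∀ l, lam0 < l → ∀ y : Dm, (y : X) ∈ N l →
      M * (l ^ α * ‖(y : X)‖) ≤ ‖L y‖) ↔ ∀ l, lam0 < l → ∀ x, M * (l ^ α * ‖Ll l x‖) ≤ ‖x‖ :=
    fun M => forall₂_congr fun l hl => by
      simp only [← mul_assoc, ← SetLike.mem_coe, ← hrange l hl]
      exact forall_range_mul_norm_le_norm_iff
        (fun x => hND l hl <| SetLike.mem_coe.mp <| hrange l hl ▸ Set.mem_range_self x)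
        (hLLl l hl) _
  simp only [hlower]
  simpa only [Subtype.forall] using exists_pos_mul_le_norm_iff_forall_exists_bound
    (fun l : {l // lam0 < l} => Ll l) (fun l => (l : ℝ) ^ α)
    fun l => Real.rpow_nonneg (hlam0.trans l.2).le α

/-- **Characterization of the decay of Dirichlet operators.**
Let `X`, `∂X` be complex Banach spaces, `λ₀ > 0`, `α ∈ (0,1]`.  For each `λ > λ₀` let
`N_λ ⊆ X` be a subspace and `L_λ ∈ L(∂X, X)` with range exactly `N_λ`, and let `L` be a
linear map defined on a subspace of `X` containing all `N_λ`, with values in `∂X`, such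
that `L (L_λ x) = x` for all `λ > λ₀` and `x ∈ ∂X`.  Then the following are equivalent:
(a) for every `x ∈ ∂X`, `sup_{λ>λ₀} λ^α ‖L_λ x‖ < ∞`;
(b) there exists `M > 0` with `‖L y‖ ≥ M λ^α ‖y‖` for all `λ > λ₀` and `y ∈ N_λ`. -/
theorem stmt_18 {X dX : Type*} [NormedAddCommGroup X] [NormedSpace ℂ X] [CompleteSpace X]
    [NormedAddCommGroup dX] [NormedSpace ℂ dX] [CompleteSpace dX]
    (lam0 : ℝ) (hlam0 : 0 < lam0) (α : ℝ) (hα1 : 0 < α) (hα2 : α ≤ 1)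
    (N : ℝ → Submodule ℂ X) (Ll : ℝ → dX →L[ℂ] X)
    (Dm : Submodule ℂ X) (L : Dm →ₗ[ℂ] dX)
    (hrange : ∀ l : ℝ, lam0 < l → Set.range (Ll l) = (N l : Set X))
    (hND : ∀ l : ℝ, lam0 < l → N l ≤ Dm)
    (hLLl : ∀ l : ℝ, lam0 < l → ∀ x : dX, ∀ h : Ll l x ∈ Dm, L ⟨Ll l x, h⟩ = x) :
    (∀ x : dX, ∃ C : ℝ, ∀ l : ℝ, lam0 < l → l ^ α * ‖Ll l x‖ ≤ C) ↔
      (∃ M : ℝ, 0 < M ∧ ∀ l : ℝ, lam0 < l → ∀ y : Dm, (y : X) ∈ N l →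
        M * (l ^ α * ‖(y : X)‖) ≤ ‖L y‖) :=
  stmt_18_general lam0 hlam0 α N Ll Dm L hrange hND hLLl
end
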